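/- Let B ∈ HS(A'(T)) be a nontrivial subdirectly irreducible algebra satisfying e_i(ȳ,x) ≈ 0 for all i ∈ {0,1,2}. Then B is isomorphic to exactly one of: the two-element subalgebra {0, C} of A'(T); the three-element subalgebra {0, H, M_1^0} of A'(T); or the four-element quotient W = {0, H, C, D, M_1^0}/Cg(M_1^0, 0) of the subalgebra of A'(T) generated by {H, C}. -/

import Mathlib

open FirstOrder

namespace McKenzie

/-- A Turing machine instruction `(s, r, w, d, t)`: "in state `s` reading `r`,
write `w`, move in direction `d` (`true` = right, `false` = left), enter state `t`". -/
structure Instr (n : ℕ) where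
  s : Fin (n + 1)
  r : Bool
  w : Bool
  d : Bool
  t : Fin (n + 1)

/-- A Turing machine: a finite list of instructions on states `μ0, …, μn`
(represented by `Fin (states+1)`), where `μ0` is the halting state (carrying no
instructions) and `μ1` is the initial state. -/
structure TM where
  states : ℕ
  instr : List (Instr states)
  halt_no_instr : ∀ i ∈ instr, i.s ≠ 0

/-- A configuration of a Turing machine: a tape, a head position and a state. -/
structure Cfg (T : TM) where
  tape : ℤ → Bool
  head : ℤ
  state : Fin (T.states + 1)

/-- One computation step of the machine (using the first applicable instruction). -/
def TM.step (T : TM) (Q : Cfg T) : Option (Cfg T) :=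
  match T.instr.find? (fun i => decide (i.s = Q.state ∧ i.r = Q.tape Q.head)) with
  | none => none
  | some i =>
      some ⟨Function.update Q.tape Q.head i.w,
        if i.d then Q.head + 1 else Q.head - 1, i.t⟩

/-- The configuration after `n` steps when started in state `μ1` on the blank tape. -/
def TM.run (T : TM) : ℕ → Option (Cfg T)
  | 0 => some ⟨fun _ => false, 0, 1⟩
  | n + 1 => (T.run n).bind T.step

/-- `T` halts (started in the initial state `μ1` on the empty, all-zero, tape). -/
def TM.Halts (T : TM) : Prop := ∃ (n : ℕ) (Q : Cfg T), T.run n = some Q ∧ Q.state = 0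

/-- The universe of the algebra `A'(T)`:
`0`, `U = {1,2,H}`, `W = {C, D, ∂C, ∂D}`, and
`V = {C_ir^s, D_ir^s, M_i^r}` together with their barred versions. -/
inductive El (T : TM) : Type
  | zero
  | one
  | two
  | H
  | C (bar : Bool)
  | D (bar : Bool)
  | Cv (bar : Bool) (i : Fin (T.states + 1)) (r s : Bool)
  | Dv (bar : Bool) (i : Fin (T.states + 1)) (r s : Bool)
  | Mv (bar : Bool) (i : Fin (T.states + 1)) (r : Bool)
  deriving DecidableEq

namespace El

variable {T : TM}

/-- The bar involution `∂`, defined (only) on `V ∪ W`. -/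
def bar : El T → Option (El T)
  | C b => some (C (!b))
  | D b => some (D (!b))
  | Cv b i r s => some (Cv (!b) i r s)
  | Dv b i r s => some (Dv (!b) i r s)
  | Mv b i r => some (Mv (!b) i r)
  | _ => none

/-- The flat (height 1) semilattice meet with bottom element `0`. -/
def meet (x y : El T) : El T := if x = y then x else zero

/-- Join in the flat semilattice, for comparable elements. -/
def fjoin (x y : El T) : El T := if x = zero then y else x

/-- The nonassociative multiplication: `2·D = H·C = D`, `1·C = C`,
`2·∂D = H·∂C = ∂D`, `1·∂C = ∂C`, and `0` otherwise. -/
def mul : El T → El T → El T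
  | two, D b => D b
  | H, C b => D b
  | one, C b => C b
  | _, _ => zero

/-- `J(x,y,z) = (x ∧ ∂y ∧ z) ∨ (x ∧ y)`. -/
def opJ (x y z : El T) : El T :=
  if x = y then x else if bar y = some x then meet x z else zero

/-- `J'(x,y,z) = (x ∧ y ∧ z) ∨ (x ∧ ∂y)`. -/
def opJ' (x y z : El T) : El T :=
  if x = y then meet x z else if bar y = some x then x else zero

/-- `K(x,y,z) = (∂x ∧ y) ∨ (∂x ∧ ∂y ∧ z) ∨ (x ∧ y ∧ z)`. -/
def opK (x y z : El T) : El T :=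
  if bar y = some x then y
  else if x = y ∧ bar z = some x then z
  else meet x (meet y z)

/-- `(x ∧ y) ∨ (x ∧ z)`. -/
def sCore (x y z : El T) : El T := fjoin (meet x y) (meet x z)

/-- Membership in `V₀` (the elements of `V` with state index `0`). -/
def isV0 : El T → Bool
  | Cv _ i _ _ => decide (i = 0)
  | Dv _ i _ _ => decide (i = 0)
  | Mv _ i _ => decide (i = 0)
  | _ => false

/-- `S₀(u,x,y,z) = (x∧y) ∨ (x∧z)` if `u ∈ V₀`, else `0`. -/
def opS0 (u x y z : El T) : El T := if isV0 u then sCore x y z else zero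

/-- `S₁(u,x,y,z) = (x∧y) ∨ (x∧z)` if `u ∈ {1,2}`, else `0`. -/
def opS1 (u x y z : El T) : El T := if u = one ∨ u = two then sCore x y z else zero

/-- `S₂(u,v,x,y,z) = (x∧y) ∨ (x∧z)` if `u = ∂v ∈ V ∪ W`, else `0`. -/
def opS2 (u v x y z : El T) : El T := if bar v = some u then sCore x y z else zero

/-- The operation `T(w,x,y,z)`. -/
def opT (w x y z : El T) : El T :=
  if mul w x = mul y z then
    if w = y ∧ x = z then mul w x
    else if mul w x ≠ zero then (bar (mul w x)).getD zero else zero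
  else zero

/-- `I(1) = C₁₀⁰`, `I(H) = M₁⁰`, `I(2) = D₁₀⁰`, and `0` otherwise. -/
def opI : El T → El T
  | one => Cv false 1 false false
  | H => Mv false 1 false
  | two => Dv false 1 false false
  | _ => zero

/-- The left-moving machine operation `L_{irt}` attached to an instruction
`(μ_i, r, s, L, μ_j)` and `t ∈ {0,1}`. -/
def opL (ins : Instr T.states) (t : Bool) : El T → El T → El T → El T
  | one, one, Cv b i r s' => if i = ins.s ∧ r = ins.r then Cv b ins.t t s' else zero
  | H, one, Cv b i r s' => if i = ins.s ∧ r = ins.r ∧ s' = t then Mv b ins.t t else zero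
  | two, H, Mv b i r => if i = ins.s ∧ r = ins.r then Dv b ins.t t ins.w else zero
  | two, two, Dv b i r s' => if i = ins.s ∧ r = ins.r then Dv b ins.t t s' else zero
  | _, _, _ => zero

/-- The right-moving machine operation `R_{irt}` attached to an instruction
`(μ_i, r, s, R, μ_j)` and `t ∈ {0,1}`. -/
def opR (ins : Instr T.states) (t : Bool) : El T → El T → El T → El T
  | one, one, Cv b i r s' => if i = ins.s ∧ r = ins.r then Cv b ins.t t s' else zero
  | H, one, Mv b i r => if i = ins.s ∧ r = ins.r then Cv b ins.t t ins.w else zero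
  | two, H, Dv b i r s' => if i = ins.s ∧ r = ins.r ∧ s' = t then Mv b ins.t t else zero
  | two, two, Dv b i r s' => if i = ins.s ∧ r = ins.r then Dv b ins.t t s' else zero
  | _, _, _ => zero

/-- The machine operation (from `𝓛 ∪ 𝓡`) attached to an instruction. -/
def mach (ins : Instr T.states) (t : Bool) (x y u : El T) : El T :=
  if ins.d then opR ins t x y u else opL ins t x y u

/-- The relation `≺` on `{1,2,H}`. -/
def prec : El T → El T → Bool
  | two, two => true
  | two, H => true
  | one, one => true
  | _, _ => false

/-- The operation `U_F^1`. -/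
def opU1 (F : El T → El T → El T → El T) (x y z u : El T) : El T :=
  if prec x z then
    if y = z then F x y u
    else if F x y u ≠ zero then (bar (F x y u)).getD zero else zero
  else zero

/-- The operation `U_F^0`. -/
def opU0 (F : El T → El T → El T → El T) (x y z u : El T) : El T :=
  if prec x z then
    if x = y then F y z u
    else if F y z u ≠ zero then (bar (F y z u)).getD zero else zero
  else zero

end El

/-- The unary operation symbols of `A'(T)`. -/
inductive Ops1 : Type
  | I

/-- The binary operation symbols of `A'(T)`. -/
inductive Ops2 : Type
  | meet
  | mul

/-- The ternary operation symbols of `A'(T)`: `J`, `J'`, `K` and the machine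
operations from `𝓛 ∪ 𝓡` (one for each instruction and each `t ∈ {0,1}`). -/
inductive Ops3 (T : TM) : Type
  | J
  | J'
  | K
  | mach (k : Fin T.instr.length) (t : Bool)

/-- The 4-ary operation symbols of `A'(T)`: `S₀`, `S₁`, `T` and the operations
`U_F^1, U_F^0` for `F ∈ 𝓛 ∪ 𝓡`. -/
inductive Ops4 (T : TM) : Type
  | S0
  | S1
  | T
  | u1 (k : Fin T.instr.length) (t : Bool)
  | u0 (k : Fin T.instr.length) (t : Bool)

/-- The 5-ary operation symbols of `A'(T)`: `S₂`. -/
inductive Ops5 : Type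
  | S2

/-- The signature (similarity type) of the algebra `A'(T)`; the constant symbol
(of arity 0) denotes the bottom element `0`. -/
def Sig (T : TM) : FirstOrder.Language.{0, 0} where
  Functions n :=
    match n with
    | 0 => PUnit
    | 1 => Ops1
    | 2 => Ops2
    | 3 => Ops3 T
    | 4 => Ops4 T
    | 5 => Ops5
    | _ => PEmpty
  Relations _ := PEmpty


/-- The constant symbol `0` as an element of the signature. -/
def fn0 (T : TM) : (Sig T).Functions 0 := PUnit.unit
/-- Unary operation symbols as elements of the signature. -/
def fn1 (T : TM) (o : Ops1) : (Sig T).Functions 1 := o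
/-- Binary operation symbols as elements of the signature. -/
def fn2 (T : TM) (o : Ops2) : (Sig T).Functions 2 := o
/-- Ternary operation symbols as elements of the signature. -/
def fn3 (T : TM) (o : Ops3 T) : (Sig T).Functions 3 := o
/-- 4-ary operation symbols as elements of the signature. -/
def fn4 (T : TM) (o : Ops4 T) : (Sig T).Functions 4 := o
/-- 5-ary operation symbols as elements of the signature. -/
def fn5 (T : TM) (o : Ops5) : (Sig T).Functions 5 := o

/-- The algebra `A'(T)`: the interpretation of the signature `Sig T` on `El T`. -/
instance elStructure (T : TM) : (Sig T).Structure (El T) where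
  funMap {n} f v :=
    match n, f, v with
    | 0, _, _ => El.zero
    | 1, Ops1.I, v => El.opI (v 0)
    | 2, Ops2.meet, v => El.meet (v 0) (v 1)
    | 2, Ops2.mul, v => El.mul (v 0) (v 1)
    | 3, Ops3.J, v => El.opJ (v 0) (v 1) (v 2)
    | 3, Ops3.J', v => El.opJ' (v 0) (v 1) (v 2)
    | 3, Ops3.K, v => El.opK (v 0) (v 1) (v 2)
    | 3, Ops3.mach k t, v => El.mach (T.instr.get k) t (v 0) (v 1) (v 2)
    | 4, Ops4.S0, v => El.opS0 (v 0) (v 1) (v 2) (v 3)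
    | 4, Ops4.S1, v => El.opS1 (v 0) (v 1) (v 2) (v 3)
    | 4, Ops4.T, v => El.opT (v 0) (v 1) (v 2) (v 3)
    | 4, Ops4.u1 k t, v => El.opU1 (El.mach (T.instr.get k) t) (v 0) (v 1) (v 2) (v 3)
    | 4, Ops4.u0 k t, v => El.opU0 (El.mach (T.instr.get k) t) (v 0) (v 1) (v 2) (v 3)
    | 5, Ops5.S2, v => El.opS2 (v 0) (v 1) (v 2) (v 3) (v 4)
    | _ + 6, f, _ => f.elim
  RelMap {n} r _ := r.elim

/-- The product algebra `A'(T)^ι`. -/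
instance piStructure (T : TM) (ι : Type*) : (Sig T).Structure (ι → El T) where
  funMap f v l := Language.Structure.funMap f fun i => v i l
  RelMap r _ := r.elim

open Language

/-- A congruence of an algebra: an equivalence relation compatible with all the
fundamental operations. -/
def IsCongruence (L : Language) (B : Type*) [L.Structure B] (ρ : B → B → Prop) : Prop :=
  Equivalence ρ ∧
    ∀ {n : ℕ} (f : L.Functions n) (v w : Fin n → B),
      (∀ i, ρ (v i) (w i)) → ρ (Structure.funMap f v) (Structure.funMap f w)

/-- `PrinCg L B a b x y` says that `(x, y)` lies in the principal congruence
`Cg^B(a,b)` generated by the pair `(a,b)`. -/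
def PrinCg (L : Language) (B : Type*) [L.Structure B] (a b x y : B) : Prop :=
  ∀ ρ : B → B → Prop, IsCongruence L B ρ → ρ a b → ρ x y

/-- `B` satisfies every identity holding in `A`; by Birkhoff's theorem this says
exactly that `B` belongs to the variety generated by `A`. -/
def ModelsIdsOf (L : Language) (A : Type*) [L.Structure A] (B : Type*) [L.Structure B] : Prop :=
  ∀ t₁ t₂ : L.Term ℕ,
    (∀ v : ℕ → A, t₁.realize v = t₂.realize v) →
    ∀ v : ℕ → B, t₁.realize v = t₂.realize v

/-- Membership in the variety `V(A'(T))` generated by `A'(T)`. -/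
def InVariety (T : TM) (B : Type*) [(Sig T).Structure B] : Prop :=
  ModelsIdsOf (Sig T) (El T) B

/-- The variety `V(A'(T))` as a class of algebras. -/
def VClass (T : TM) : ∀ (B : Type) [inst : (Sig T).Structure B], Prop :=
  fun B inst => @InVariety T B inst

/-- `φ(w,x,y,z)` is a congruence formula for the class `C`: in every member of `C`
it implies `(w,x) ∈ Cg(y,z)`. -/
def IsCongruenceFormula (L : Language) (C : ∀ (B : Type) [inst : L.Structure B], Prop)
    (φ : L.Formula (Fin 4)) : Prop :=
  ∀ (B : Type) [L.Structure B], C B → ∀ w x y z : B,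
    φ.Realize ![w, x, y, z] → PrinCg L B y z w x

/-- The class `C` has definable principal subcongruences: there are congruence
formulas `Γ` and `ψ` such that any pair `a ≠ b` admits a subpair `c ≠ d` of
`Cg(a,b)` (witnessed by `Γ`) whose principal congruence is defined by `ψ`. -/
def HasDPSC (L : Language) (C : ∀ (B : Type) [inst : L.Structure B], Prop) : Prop :=
  ∃ Γ ψ : L.Formula (Fin 4),
    IsCongruenceFormula L C Γ ∧ IsCongruenceFormula L C ψ ∧
      ∀ (B : Type) [L.Structure B], C B → ∀ a b : B, a ≠ b →
        ∃ c d : B, c ≠ d ∧ Γ.Realize ![c, d, a, b] ∧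
          ∀ x y : B, PrinCg L B c d x y ↔ ψ.Realize ![x, y, c, d]

/-- The variety `V(A'(T))` is axiomatized by a finite set of identities
(which hold in `A'(T)`). -/
def FinitelyBased (T : TM) : Prop :=
  ∃ E : List ((Sig T).Term ℕ × (Sig T).Term ℕ),
    (∀ e ∈ E, ∀ v : ℕ → El T, e.1.realize v = e.2.realize v) ∧
    ∀ (B : Type) [(Sig T).Structure B],
      (InVariety T B ↔ ∀ e ∈ E, ∀ v : ℕ → B, e.1.realize v = e.2.realize v)

/-- An algebra is subdirectly irreducible iff some pair `a ≠ b` (generating the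
monolith) belongs to every nontrivial congruence. -/
def IsSI (L : Language) (B : Type*) [L.Structure B] : Prop :=
  ∃ a b : B, a ≠ b ∧ ∀ c d : B, c ≠ d → PrinCg L B c d a b

/-- An algebra is finitely subdirectly irreducible iff any two nontrivial principal
congruences have nontrivial intersection. -/
def IsFSI (L : Language) (B : Type*) [L.Structure B] : Prop :=
  ∀ a b c d : B, a ≠ b → c ≠ d →
    ∃ x y : B, x ≠ y ∧ PrinCg L B a b x y ∧ PrinCg L B c d x y

/-- The residual bound of `V(A'(T))` is finite (`κ(A'(T)) < ω`): there is a finite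
bound strictly larger than the cardinality of every subdirectly irreducible member. -/
def ResBoundFinite (T : TM) : Prop :=
  ∃ N : ℕ, ∀ (B : Type) [(Sig T).Structure B],
    InVariety T B → IsSI (Sig T) B → Finite B ∧ Nat.card B < N

/-- Membership in `HS(A'(T))`: homomorphic images of subalgebras of `A'(T)`. -/
def InHS (T : TM) (B : Type*) [(Sig T).Structure B] : Prop :=
  ∃ (S : (Sig T).Substructure (El T)) (f : S →[Sig T] B), Function.Surjective f

/-- The constant `0` of an algebra in the signature of `A'(T)`. -/
def zeroB (T : TM) (B : Type*) [(Sig T).Structure B] : B :=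
  Structure.funMap (fn0 T) (fun i : Fin 0 => i.elim0)

/-- The meet operation of an algebra in the signature of `A'(T)`. -/
def meetB (T : TM) {B : Type*} [(Sig T).Structure B] (x y : B) : B :=
  Structure.funMap (fn2 T Ops2.meet) ![x, y]

/-- The multiplication of an algebra in the signature of `A'(T)`. -/
def mulB (T : TM) {B : Type*} [(Sig T).Structure B] (x y : B) : B :=
  Structure.funMap (fn2 T Ops2.mul) ![x, y]

/-- The operation `I` of an algebra in the signature of `A'(T)`. -/
def IB (T : TM) {B : Type*} [(Sig T).Structure B] (x : B) : B :=
  Structure.funMap (fn1 T Ops1.I) ![x]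

/-- The operation `J` of an algebra in the signature of `A'(T)`. -/
def JB (T : TM) {B : Type*} [(Sig T).Structure B] (x y z : B) : B :=
  Structure.funMap (fn3 T Ops3.J) ![x, y, z]

/-- The operation `J'` of an algebra in the signature of `A'(T)`. -/
def J'B (T : TM) {B : Type*} [(Sig T).Structure B] (x y z : B) : B :=
  Structure.funMap (fn3 T Ops3.J') ![x, y, z]

/-- The operation `K` of an algebra in the signature of `A'(T)`. -/
def KB (T : TM) {B : Type*} [(Sig T).Structure B] (x y z : B) : B :=
  Structure.funMap (fn3 T Ops3.K) ![x, y, z]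

/-- The operation `S₂` of an algebra in the signature of `A'(T)`. -/
def S2B (T : TM) {B : Type*} [(Sig T).Structure B] (u v x y z : B) : B :=
  Structure.funMap (fn5 T Ops5.S2) ![u, v, x, y, z]

/-- The term `e₂(m,n,x) = S₂(m,n,x,x,x)`. -/
def e2B (T : TM) {B : Type*} [(Sig T).Structure B] (m n x : B) : B :=
  S2B T m n x x x

/-- The semilattice order of an algebra in the signature of `A'(T)`:
`x ≤ y` iff `x ∧ y = x`. -/
def leB (T : TM) {B : Type*} [(Sig T).Structure B] (x y : B) : Prop :=
  meetB T x y = x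

/-- Parameters `m̄ ∈ B² ∪ B` for one of the operations `S₀`, `S₁`, `S₂`. -/
inductive SIdx (B : Type*) : Type _
  | s0 (m : B)
  | s1 (m : B)
  | s2 (m n : B)

/-- Which of `S₀, S₁, S₂` a parameter tuple belongs to. -/
def SIdx.tag {B : Type*} : SIdx B → Fin 3
  | .s0 _ => 0
  | .s1 _ => 1
  | .s2 _ _ => 2

/-- `SApp T σ x y z` is `S_i(m̄, x, y, z)` where `σ` packages `i` and `m̄`. -/
def SApp (T : TM) {B : Type*} [(Sig T).Structure B] : SIdx B → B → B → B → B
  | .s0 m, x, y, z => Structure.funMap (fn4 T Ops4.S0) ![m, x, y, z]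
  | .s1 m, x, y, z => Structure.funMap (fn4 T Ops4.S1) ![m, x, y, z]
  | .s2 m n, x, y, z => S2B T m n x y z

/-- `eApp T σ x` is the term function `e_i(m̄, x) = S_i(m̄, x, x, x)`. -/
def eApp (T : TM) {B : Type*} [(Sig T).Structure B] (σ : SIdx B) (x : B) : B :=
  SApp T σ x x x

/-- `Range(S_j)`: the set of values of the operation `S_j` on `B`. -/
def SRange (T : TM) (B : Type*) [(Sig T).Structure B] (j : Fin 3) : Set B :=
  {w | ∃ (σ : SIdx B) (x y z : B), σ.tag = j ∧ SApp T σ x y z = w}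

/-- A unary polynomial of `B`: a term function in one variable with parameters
from `B`. -/
def IsPolynomial (T : TM) {B : Type*} [(Sig T).Structure B] (f : B → B) : Prop :=
  ∃ t : (Sig T).Term (B ⊕ Unit), ∀ x : B, f x = t.realize (Sum.elim id fun _ => x)

/-- A fundamental translation: a unary polynomial obtained from a fundamental
operation by fixing all arguments but one. -/
def IsFundTranslation (T : TM) {B : Type*} [(Sig T).Structure B] (g : B → B) : Prop :=
  ∃ (n : ℕ) (F : (Sig T).Functions n) (i : Fin n) (v : Fin n → B),
    g = fun x => Structure.funMap F (Function.update v i x)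

/-- A polynomial generated by fundamental translations: a composition of finitely
many fundamental translations. -/
inductive IsTransPoly (T : TM) {B : Type*} [(Sig T).Structure B] : (B → B) → Prop
  | id : IsTransPoly T id
  | comp {g f : B → B} : IsFundTranslation T g → IsTransPoly T f → IsTransPoly T (g ∘ f)

end McKenzie

namespace McKenzie

/-- `B` is isomorphic to the two-element subalgebra `{0, C}` of `A'(T)`. -/
def IsoTwoElt (T : TM) (B : Type*) [(Sig T).Structure B] : Prop :=
  ∃ g : B ↪[Sig T] El T, Set.range g = {El.zero, El.C false}

/-- `B` is isomorphic to the three-element subalgebra `{0, H, M₁⁰}` of `A'(T)`. -/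
def IsoThreeElt (T : TM) (B : Type*) [(Sig T).Structure B] : Prop :=
  ∃ g : B ↪[Sig T] El T, Set.range g = {El.zero, El.H, El.Mv false 1 false}

/-- `B` is isomorphic to the four-element algebra
`W = {0,H,C,D,M₁⁰}/Cg(M₁⁰,0)`: there is a surjective homomorphism onto `B` from
the subalgebra `⟨H,C⟩ = {0,H,C,D,M₁⁰}` of `A'(T)` whose kernel is the congruence
whose unique nontrivial class is `{0, M₁⁰}`. -/
def IsoW (T : TM) (B : Type*) [(Sig T).Structure B] : Prop :=
  ∃ (S : (Sig T).Substructure (El T)) (f : S →[Sig T] B),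
    (S : Set (El T)) = {El.zero, El.H, El.C false, El.D false, El.Mv false 1 false} ∧
    Function.Surjective f ∧
    ∀ x y : S, f x = f y ↔
      (x = y ∨ ((x : El T) ∈ ({El.zero, El.Mv false 1 false} : Set (El T)) ∧
        (y : El T) ∈ ({El.zero, El.Mv false 1 false} : Set (El T))))

namespace El

variable {T : TM}

lemma meet_self (x : El T) : meet x x = x := by simp [meet]

lemma meet_ne {x y : El T} (h : x ≠ y) : meet x y = zero := by simp [meet, h]

lemma mul_fst {x : El T} (y : El T) (h1 : x ≠ one) (h2 : x ≠ two) (h3 : x ≠ H) :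
    mul x y = zero := by
  cases x <;> cases y <;> simp_all [mul]

lemma mul_H {y : El T} (h : ∀ b, y ≠ C b) : mul H y = zero := by
  cases y <;> simp_all [mul]

lemma mul_snd {x y : El T} (h1 : x ≠ one) (h2 : x ≠ two) (hy : ∀ b, y ≠ C b) :
    mul x y = zero := by
  by_cases hx : x = H
  · subst hx; exact mul_H hy
  · exact mul_fst y h1 h2 hx

lemma mul_zero_right (x : El T) : mul x zero = zero := by
  cases x <;> rfl

lemma mul_vals {x : El T} (y : El T) (h1 : x ≠ one) : mul x y = zero ∨ ∃ b, mul x y = D b := by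
  cases x <;> cases y <;> simp_all [mul]

lemma mul_ne_zero {x y : El T} (h1 : x ≠ one) (h2 : x ≠ two) (h : mul x y ≠ zero) :
    ∃ b, x = H ∧ y = C b := by
  cases x <;> cases y <;> simp_all [mul]

lemma opJ_eq {x y : El T} (z : El T) (h : bar y ≠ some x) : opJ x y z = meet x y := by
  by_cases hxy : x = y
  · subst hxy; simp [opJ, meet]
  · simp [opJ, meet, hxy, h]

lemma opJ'_eq {x y : El T} (z : El T) (h : bar y ≠ some x) :
    opJ' x y z = meet (meet x y) z := by
  by_cases hxy : x = y
  · subst hxy; simp [opJ', meet]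
  · have : meet x y = zero := meet_ne hxy
    simp [opJ', hxy, h, this, meet]

lemma opK_eq {x y z : El T} (h1 : bar y ≠ some x) (h2 : bar z ≠ some x) :
    opK x y z = meet x (meet y z) := by
  simp only [opK, h1, if_false]
  have : ¬(x = y ∧ bar z = some x) := fun hc => h2 hc.2
  simp [this]

lemma opS0_eq {u : El T} (x y z : El T) (h : isV0 u = false) : opS0 u x y z = zero := by
  simp [opS0, h]

lemma opS1_eq {u : El T} (x y z : El T) (h1 : u ≠ one) (h2 : u ≠ two) :
    opS1 u x y z = zero := by
  simp [opS1, h1, h2]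

lemma opS2_eq {u v : El T} (x y z w : El T) (h : bar v ≠ some u) :
    opS2 u v x y z = zero := by
  simp [opS2, h]

lemma sCore_diag (x : El T) : sCore x x x = x := by
  simp only [sCore, meet_self, fjoin]
  split <;> simp_all

lemma opT_eq {w x y z : El T} (hw1 : w ≠ one) (hw2 : w ≠ two) (hy1 : y ≠ one)
    (hy2 : y ≠ two) : opT w x y z = mul (meet w y) (meet x z) := by
  by_cases hwy : w = y
  · subst hwy
    by_cases hxz : x = z
    · subst hxz; simp [opT, meet_self]
    · rw [meet_self, meet_ne hxz, mul_zero_right]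
      unfold opT
      split_ifs with h1 h2 h3
      · exact absurd h2.2 hxz
      · exfalso
        obtain ⟨b, rfl, rfl⟩ := mul_ne_zero hw1 hw2 h3
        obtain ⟨b', hH', rfl⟩ := mul_ne_zero hy1 hy2 (h1 ▸ h3)
        rw [show mul H (C b) = D b from rfl] at h1
        rw [show mul H (C b') = D b' from rfl] at h1
        cases h1
        exact hxz rfl
      · rfl
      · rfl
  · rw [meet_ne hwy, mul_fst _ (by simp) (by simp) (by simp)]
    unfold opT
    split_ifs with h1 h2 h3
    · exact absurd h2.1 hwy
    · exfalso
      obtain ⟨b, rfl, rfl⟩ := mul_ne_zero hw1 hw2 h3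
      obtain ⟨b', hH', hC'⟩ := mul_ne_zero hy1 hy2 (h1 ▸ h3)
      subst hH'; subst hC'
      rw [show mul H (C b) = D b from rfl] at h1
      rw [show mul H (C b') = D b' from rfl] at h1
      cases h1
      exact hwy rfl
    · rfl
    · rfl

lemma opI_eq {x : El T} (h1 : x ≠ one) (h2 : x ≠ two) :
    opI x = if x = H then Mv false 1 false else zero := by
  cases x <;> simp_all [opI]

lemma prec_false {x : El T} (z : El T) (h1 : x ≠ one) (h2 : x ≠ two) :
    prec x z = false := by
  cases x <;> cases z <;> simp_all [prec]

lemma opU1_eq {x : El T} (F : El T → El T → El T → El T) (y z u : El T)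
    (h1 : x ≠ one) (h2 : x ≠ two) : opU1 F x y z u = zero := by
  simp [opU1, prec_false z h1 h2]

lemma opU0_eq {x : El T} (F : El T → El T → El T → El T) (y z u : El T)
    (h1 : x ≠ one) (h2 : x ≠ two) : opU0 F x y z u = zero := by
  simp [opU0, prec_false z h1 h2]

lemma opL_eq {x y : El T} (ins : Instr T.states) (t : Bool) (u : El T)
    (h1 : x ≠ one) (h2 : x ≠ two) (h3 : y ≠ one) (h4 : y ≠ two) :
    opL ins t x y u = zero := by
  cases x <;> cases y <;> cases u <;> simp_all [opL]

lemma opR_eq {x y : El T} (ins : Instr T.states) (t : Bool) (u : El T)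
    (h1 : x ≠ one) (h2 : x ≠ two) (h3 : y ≠ one) (h4 : y ≠ two) :
    opR ins t x y u = zero := by
  cases x <;> cases y <;> cases u <;> simp_all [opR]

lemma mach_eq {x y : El T} (ins : Instr T.states) (t : Bool) (u : El T)
    (h1 : x ≠ one) (h2 : x ≠ two) (h3 : y ≠ one) (h4 : y ≠ two) :
    mach ins t x y u = zero := by
  unfold mach; split
  · exact opR_eq ins t u h1 h2 h3 h4
  · exact opL_eq ins t u h1 h2 h3 h4

end El

open Language

/-- The common "core" reduction of all fundamental operations. -/
def coreMap {T : TM} {X : Type*} (z : X) (mt ml : X → X → X) (ii : X → X) :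
    ∀ {n : ℕ}, (Sig T).Functions n → (Fin n → X) → X
  | 0, _, _ => z
  | 1, Ops1.I, v => ii (v 0)
  | 2, Ops2.meet, v => mt (v 0) (v 1)
  | 2, Ops2.mul, v => ml (v 0) (v 1)
  | 3, Ops3.J, v => mt (v 0) (v 1)
  | 3, Ops3.J', v => mt (mt (v 0) (v 1)) (v 2)
  | 3, Ops3.K, v => mt (v 0) (mt (v 1) (v 2))
  | 3, Ops3.mach _ _, _ => z
  | 4, Ops4.T, v => ml (mt (v 0) (v 2)) (mt (v 1) (v 3))
  | 4, Ops4.S0, _ => z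
  | 4, Ops4.S1, _ => z
  | 4, Ops4.u1 _ _, _ => z
  | 4, Ops4.u0 _ _, _ => z
  | 5, Ops5.S2, _ => z
  | (_ + 6), F, _ => F.elim

/-- On tuples of "good", bar-free elements, every fundamental operation of
`A'(T)` reduces to its core. -/
lemma elCore {T : TM} : ∀ {n : ℕ} (F : (Sig T).Functions n) (v : Fin n → El T),
    (∀ i, v i ≠ El.one ∧ v i ≠ El.two ∧ (v i).isV0 = false) →
    (∀ i j, El.bar (v j) ≠ some (v i)) →
    Structure.funMap F v = coreMap El.zero El.meet El.mul El.opI F v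
  | 0, _, v, _, _ => rfl
  | 1, Ops1.I, v, hg, _ => by
      show El.opI (v 0) = _
      rw [El.opI_eq (hg 0).1 (hg 0).2.1]
      show _ = El.opI (v 0)
      rw [El.opI_eq (hg 0).1 (hg 0).2.1]
  | 2, Ops2.meet, v, _, _ => rfl
  | 2, Ops2.mul, v, _, _ => rfl
  | 3, Ops3.J, v, _, hb => El.opJ_eq (v 2) (hb 0 1)
  | 3, Ops3.J', v, _, hb => El.opJ'_eq (v 2) (hb 0 1)
  | 3, Ops3.K, v, _, hb => El.opK_eq (hb 0 1) (hb 0 2)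
  | 3, Ops3.mach k t, v, hg, _ =>
      El.mach_eq _ t (v 2) (hg 0).1 (hg 0).2.1 (hg 1).1 (hg 1).2.1
  | 4, Ops4.T, v, hg, _ =>
      El.opT_eq (hg 0).1 (hg 0).2.1 (hg 2).1 (hg 2).2.1
  | 4, Ops4.S0, v, hg, _ => El.opS0_eq (v 1) (v 2) (v 3) (hg 0).2.2
  | 4, Ops4.S1, v, hg, _ => El.opS1_eq (v 1) (v 2) (v 3) (hg 0).1 (hg 0).2.1
  | 4, Ops4.u1 k t, v, hg, _ => El.opU1_eq _ (v 1) (v 2) (v 3) (hg 0).1 (hg 0).2.1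
  | 4, Ops4.u0 k t, v, hg, _ => El.opU0_eq _ (v 1) (v 2) (v 3) (hg 0).1 (hg 0).2.1
  | 5, Ops5.S2, v, _, hb => El.opS2_eq (v 2) (v 3) (v 4) (v 1) (hb 0 1)
  | (_ + 6), F, _, _, _ => F.elim

/-- Mapping a core expression through a function commuting with the core
operations on a closed set. -/
lemma coreMap_map {T : TM} {X Y : Type*} {s : Set X} (g : X → Y)
    {z : X} {mt ml : X → X → X} {ii : X → X}
    {z' : Y} {mt' ml' : Y → Y → Y} {ii' : Y → Y}
    (hzs : z ∈ s) (hmts : ∀ a ∈ s, ∀ b ∈ s, mt a b ∈ s)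
    (hz : g z = z')
    (hmt : ∀ a ∈ s, ∀ b ∈ s, g (mt a b) = mt' (g a) (g b))
    (hml : ∀ a ∈ s, ∀ b ∈ s, g (ml a b) = ml' (g a) (g b))
    (hii : ∀ a ∈ s, g (ii a) = ii' (g a)) :
    ∀ {n : ℕ} (F : (Sig T).Functions n) (v : Fin n → X), (∀ i, v i ∈ s) →
      g (coreMap z mt ml ii F v) = coreMap z' mt' ml' ii' F (g ∘ v)
  | 0, _, v, _ => hz
  | 1, Ops1.I, v, hv => hii _ (hv 0)
  | 2, Ops2.meet, v, hv => hmt _ (hv 0) _ (hv 1)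
  | 2, Ops2.mul, v, hv => hml _ (hv 0) _ (hv 1)
  | 3, Ops3.J, v, hv => hmt _ (hv 0) _ (hv 1)
  | 3, Ops3.J', v, hv => by
      show g (mt (mt (v 0) (v 1)) (v 2)) = mt' (mt' (g (v 0)) (g (v 1))) (g (v 2))
      rw [hmt _ (hmts _ (hv 0) _ (hv 1)) _ (hv 2), hmt _ (hv 0) _ (hv 1)]
  | 3, Ops3.K, v, hv => by
      show g (mt (v 0) (mt (v 1) (v 2))) = mt' (g (v 0)) (mt' (g (v 1)) (g (v 2)))
      rw [hmt _ (hv 0) _ (hmts _ (hv 1) _ (hv 2)), hmt _ (hv 1) _ (hv 2)]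
  | 3, Ops3.mach _ _, v, _ => hz
  | 4, Ops4.T, v, hv => by
      show g (ml (mt (v 0) (v 2)) (mt (v 1) (v 3))) = ml' (mt' (g (v 0)) (g (v 2))) (mt' (g (v 1)) (g (v 3)))
      rw [hml _ (hmts _ (hv 0) _ (hv 2)) _ (hmts _ (hv 1) _ (hv 3)),
        hmt _ (hv 0) _ (hv 2), hmt _ (hv 1) _ (hv 3)]
  | 4, Ops4.S0, v, _ => hz
  | 4, Ops4.S1, v, _ => hz
  | 4, Ops4.u1 _ _, v, _ => hz
  | 4, Ops4.u0 _ _, v, _ => hz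
  | 5, Ops5.S2, v, _ => hz
  | (_ + 6), F, _, _ => F.elim

/-- Membership version. -/
lemma coreMap_mem {T : TM} {X : Type*} {s : Set X}
    {z : X} {mt ml : X → X → X} {ii : X → X}
    (hzs : z ∈ s) (hmts : ∀ a ∈ s, ∀ b ∈ s, mt a b ∈ s)
    (hmls : ∀ a ∈ s, ∀ b ∈ s, ml a b ∈ s)
    (hiis : ∀ a ∈ s, ii a ∈ s) :
    ∀ {n : ℕ} (F : (Sig T).Functions n) (v : Fin n → X), (∀ i, v i ∈ s) →
      coreMap z mt ml ii F v ∈ s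
  | 0, _, v, _ => hzs
  | 1, Ops1.I, v, hv => hiis _ (hv 0)
  | 2, Ops2.meet, v, hv => hmts _ (hv 0) _ (hv 1)
  | 2, Ops2.mul, v, hv => hmls _ (hv 0) _ (hv 1)
  | 3, Ops3.J, v, hv => hmts _ (hv 0) _ (hv 1)
  | 3, Ops3.J', v, hv => hmts _ (hmts _ (hv 0) _ (hv 1)) _ (hv 2)
  | 3, Ops3.K, v, hv => hmts _ (hv 0) _ (hmts _ (hv 1) _ (hv 2))
  | 3, Ops3.mach _ _, v, _ => hzs
  | 4, Ops4.T, v, hv => hmls _ (hmts _ (hv 0) _ (hv 2)) _ (hmts _ (hv 1) _ (hv 3))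
  | 4, Ops4.S0, v, _ => hzs
  | 4, Ops4.S1, v, _ => hzs
  | 4, Ops4.u1 _ _, v, _ => hzs
  | 4, Ops4.u0 _ _, v, _ => hzs
  | 5, Ops5.S2, v, _ => hzs
  | (_ + 6), F, _, _ => F.elim

section Push

variable {T : TM} {X Y : Type*} [(Sig T).Structure X] [(Sig T).Structure Y]

lemma map_zeroB (f : X →[Sig T] Y) : f (zeroB T X) = zeroB T Y := by
  have h := f.map_fun (fn0 T) (fun i : Fin 0 => i.elim0)
  rw [zeroB, h, zeroB]
  exact congrArg _ (funext fun i => i.elim0)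

lemma map_meetB (f : X →[Sig T] Y) (a b : X) :
    f (meetB T a b) = meetB T (f a) (f b) := by
  rw [meetB, f.map_fun, meetB]
  congr 1; funext i; fin_cases i <;> rfl

lemma map_mulB (f : X →[Sig T] Y) (a b : X) :
    f (mulB T a b) = mulB T (f a) (f b) := by
  rw [mulB, f.map_fun, mulB]
  congr 1; funext i; fin_cases i <;> rfl

lemma map_IB (f : X →[Sig T] Y) (a : X) : f (IB T a) = IB T (f a) := by
  rw [IB, f.map_fun, IB]
  congr 1; funext i; fin_cases i <;> rfl

end Push

section SFB

variable {T : TM} {B : Type*} [(Sig T).Structure B]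
  {S : (Sig T).Substructure (El T)} (f : S →[Sig T] B)

lemma val_zeroB : ((zeroB T S : S) : El T) = El.zero := rfl

lemma val_meetB (a b : S) : ((meetB T a b : S) : El T) = El.meet ↑a ↑b := rfl

lemma val_mulB (a b : S) : ((mulB T a b : S) : El T) = El.mul ↑a ↑b := rfl

lemma val_IB (a : S) : ((IB T a : S) : El T) = El.opI ↑a := rfl

/-- All fundamental operations of a surjective image of a good subalgebra
reduce to the core. -/
lemma coreB (hf : Function.Surjective f)
    (hS1 : ∀ x ∈ S, x ≠ El.one ∧ x ≠ El.two ∧ El.isV0 x = false)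
    (hSb : ∀ x ∈ S, ∀ y ∈ S, El.bar y ≠ some x)
    {n : ℕ} (F : (Sig T).Functions n) (v : Fin n → B) :
    Structure.funMap F v = coreMap (zeroB T B) (meetB T) (mulB T) (IB T) F v := by
  set w : Fin n → S := fun i => Function.surjInv hf (v i) with hwdef
  have hw : ∀ i, f (w i) = v i := fun i => Function.surjInv_eq hf (v i)
  have h1 : Structure.funMap F v = f (Structure.funMap F w) := by
    rw [f.map_fun]
    congr 1; funext i; exact (hw i).symm
  have h2 : Structure.funMap F w = coreMap (zeroB T S) (meetB T) (mulB T) (IB T) F w := by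
    apply Subtype.ext
    have hval : ((Structure.funMap F w : S) : El T)
        = Structure.funMap F (fun i => ((w i : El T))) := rfl
    rw [hval, elCore F _ (fun i => hS1 _ (w i).2) (fun i j => hSb _ (w i).2 _ (w j).2)]
    have := coreMap_map (s := (Set.univ : Set S)) (Subtype.val)
      (Set.mem_univ _) (fun _ _ _ _ => Set.mem_univ _)
      (val_zeroB) (fun a _ b _ => val_meetB a b) (fun a _ b _ => val_mulB a b)
      (fun a _ => val_IB a) F w (fun i => Set.mem_univ _)
    exact this.symm
  have h3 : f (coreMap (zeroB T S) (meetB T) (mulB T) (IB T) F w)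
      = coreMap (zeroB T B) (meetB T) (mulB T) (IB T) F (⇑f ∘ w) := by
    exact coreMap_map (s := (Set.univ : Set S)) (⇑f)
      (Set.mem_univ _) (fun _ _ _ _ => Set.mem_univ _)
      (map_zeroB f) (fun a _ b _ => map_meetB f a b) (fun a _ b _ => map_mulB f a b)
      (fun a _ => map_IB f a) F w (fun i => Set.mem_univ _)
  rw [h1, h2, h3]
  congr 1
  funext i
  exact hw i

lemma meetB_subtype_self (a : S) : meetB T a a = a :=
  Subtype.ext (by rw [val_meetB]; exact El.meet_self _)

lemma meetB_subtype_ne {a b : S} (h : a ≠ b) : meetB T a b = zeroB T S :=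
  Subtype.ext (by
    rw [val_meetB, val_zeroB]
    exact El.meet_ne (fun hv => h (Subtype.ext hv)))

lemma meetB_self (hf : Function.Surjective f) (x : B) : meetB T x x = x := by
  obtain ⟨s, rfl⟩ := hf x
  rw [← map_meetB, meetB_subtype_self]

lemma meetB_ne (hf : Function.Surjective f) {x y : B} (h : x ≠ y) :
    meetB T x y = zeroB T B := by
  obtain ⟨s, rfl⟩ := hf x
  obtain ⟨t, rfl⟩ := hf y
  have hst : s ≠ t := fun e => h (congrArg f e)
  rw [← map_meetB, meetB_subtype_ne hst, map_zeroB]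

end SFB

/-- Congruence from a "zero class" closed under multiplication and `I`. -/
lemma mkCong {T : TM} {B : Type*} [(Sig T).Structure B]
    (hcore : ∀ {n : ℕ} (F : (Sig T).Functions n) (v : Fin n → B),
      Structure.funMap F v = coreMap (zeroB T B) (meetB T) (mulB T) (IB T) F v)
    (hms : ∀ x : B, meetB T x x = x)
    (hmn : ∀ x y : B, x ≠ y → meetB T x y = zeroB T B)
    (Z : Set B) (h0 : zeroB T B ∈ Z)
    (hml : ∀ x ∈ Z, ∀ y : B, mulB T x y ∈ Z ∧ mulB T y x ∈ Z)
    (hI : ∀ x ∈ Z, IB T x ∈ Z) :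
    IsCongruence (Sig T) B (fun p q => p = q ∨ (p ∈ Z ∧ q ∈ Z)) := by
  have hZm : ∀ a b : B, a ∈ Z → meetB T a b ∈ Z ∧ meetB T b a ∈ Z := by
    intro a b ha
    by_cases hab : a = b
    · subst hab; rw [hms]; exact ⟨ha, ha⟩
    · rw [hmn _ _ hab, hmn _ _ (Ne.symm hab)]; exact ⟨h0, h0⟩
  set ρ : B → B → Prop := fun p q => p = q ∨ (p ∈ Z ∧ q ∈ Z) with hρ
  have hmeetc : ∀ p q p' q', ρ p p' → ρ q q' → ρ (meetB T p q) (meetB T p' q') := by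
    intro p q p' q' h1 h2
    rcases h1 with rfl | ⟨h1a, h1b⟩
    · rcases h2 with rfl | ⟨h2a, h2b⟩
      · exact Or.inl rfl
      · exact Or.inr ⟨(hZm _ p h2a).2, (hZm _ p h2b).2⟩
    · exact Or.inr ⟨(hZm _ q h1a).1, (hZm _ q' h1b).1⟩
  have hmulc : ∀ p q p' q', ρ p p' → ρ q q' → ρ (mulB T p q) (mulB T p' q') := by
    intro p q p' q' h1 h2
    rcases h1 with rfl | ⟨h1a, h1b⟩
    · rcases h2 with rfl | ⟨h2a, h2b⟩
      · exact Or.inl rfl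
      · exact Or.inr ⟨(hml _ h2a p).2, (hml _ h2b p).2⟩
    · exact Or.inr ⟨(hml _ h1a q).1, (hml _ h1b q').1⟩
  have hIc : ∀ p p', ρ p p' → ρ (IB T p) (IB T p') := by
    intro p p' h1
    rcases h1 with rfl | ⟨h1a, h1b⟩
    · exact Or.inl rfl
    · exact Or.inr ⟨hI _ h1a, hI _ h1b⟩
  constructor
  · constructor
    · intro x; exact Or.inl rfl
    · intro x y h
      rcases h with rfl | ⟨ha, hb⟩
      · exact Or.inl rfl
      · exact Or.inr ⟨hb, ha⟩
    · intro x y z h1 h2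
      rcases h1 with rfl | ⟨ha, hb⟩
      · exact h2
      · rcases h2 with rfl | ⟨hc, hd⟩
        · exact Or.inr ⟨ha, hb⟩
        · exact Or.inr ⟨ha, hd⟩
  · intro n F v w hvw
    rw [hcore, hcore]
    match n, F with
    | 0, _ => exact Or.inl rfl
    | 1, Ops1.I => exact hIc _ _ (hvw 0)
    | 2, Ops2.meet => exact hmeetc _ _ _ _ (hvw 0) (hvw 1)
    | 2, Ops2.mul => exact hmulc _ _ _ _ (hvw 0) (hvw 1)
    | 3, Ops3.J => exact hmeetc _ _ _ _ (hvw 0) (hvw 1)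
    | 3, Ops3.J' => exact hmeetc _ _ _ _ (hmeetc _ _ _ _ (hvw 0) (hvw 1)) (hvw 2)
    | 3, Ops3.K => exact hmeetc _ _ _ _ (hvw 0) (hmeetc _ _ _ _ (hvw 1) (hvw 2))
    | 3, Ops3.mach _ _ => exact Or.inl rfl
    | 4, Ops4.T => exact hmulc _ _ _ _ (hmeetc _ _ _ _ (hvw 0) (hvw 2)) (hmeetc _ _ _ _ (hvw 1) (hvw 3))
    | 4, Ops4.S0 => exact Or.inl rfl
    | 4, Ops4.S1 => exact Or.inl rfl
    | 4, Ops4.u1 _ _ => exact Or.inl rfl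
    | 4, Ops4.u0 _ _ => exact Or.inl rfl
    | 5, Ops5.S2 => exact Or.inl rfl

section Build

variable {T : TM} {B : Type*} [(Sig T).Structure B]

lemma buildTwo
    (hcore : ∀ {n : ℕ} (F : (Sig T).Functions n) (v : Fin n → B),
      Structure.funMap F v = coreMap (zeroB T B) (meetB T) (mulB T) (IB T) F v)
    (hms : ∀ x : B, meetB T x x = x)
    (hmn : ∀ x y : B, x ≠ y → meetB T x y = zeroB T B)
    (m : B) (hm : m ≠ zeroB T B) (hall : ∀ x : B, x = zeroB T B ∨ x = m)
    (hmul : ∀ x y : B, mulB T x y = zeroB T B)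
    (hI : ∀ x : B, IB T x = zeroB T B) : IsoTwoElt T B := by
  classical
  set g : B → El T := fun x => if x = zeroB T B then El.zero else El.C false with hgdef
  have hg0 : g (zeroB T B) = El.zero := if_pos rfl
  have hgm : g m = El.C false := if_neg hm
  have hgv : ∀ x : B, g x = El.zero ∨ g x = El.C false := by
    intro x
    by_cases h : x = zeroB T B
    · left; simp [hgdef, h]
    · right; simp [hgdef, h]
  have hinj : Function.Injective g := by
    intro a b hab
    rcases hall a with rfl | rfl <;> rcases hall b with rfl | rfl
    · rfl
    · rw [hg0, hgm] at hab; exact absurd hab (fun h => El.noConfusion rfl (heq_of_eq h))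
    · rw [hg0, hgm] at hab; exact absurd hab.symm (fun h => El.noConfusion rfl (heq_of_eq h))
    · rfl
  have hcomm : ∀ {n : ℕ} (F : (Sig T).Functions n) (v : Fin n → B),
      g (Structure.funMap F v) = Structure.funMap F (g ∘ v) := by
    intro n F v
    have hgoods : ∀ i, (g ∘ v) i ≠ El.one ∧ (g ∘ v) i ≠ El.two ∧ ((g ∘ v) i).isV0 = false := by
      intro i
      rcases hgv (v i) with h | h <;>
        refine ⟨?_, ?_, ?_⟩ <;> simp [Function.comp_apply, h, El.isV0]
    have hbars : ∀ i j, El.bar ((g ∘ v) j) ≠ some ((g ∘ v) i) := by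
      intro i j
      rcases hgv (v i) with h | h <;> rcases hgv (v j) with h' | h' <;>
        simp [Function.comp_apply, h, h', El.bar]
    rw [hcore F v, elCore F (g ∘ v) hgoods hbars]
    refine coreMap_map (s := (Set.univ : Set B)) g (Set.mem_univ _)
      (fun _ _ _ _ => Set.mem_univ _) hg0 ?_ ?_ ?_ F v (fun _ => Set.mem_univ _)
    · intro a _ b _
      by_cases hab : a = b
      · subst hab; rw [hms, El.meet_self]
      · rw [hmn a b hab, hg0, El.meet_ne (fun e => hab (hinj e))]
    · intro a _ b _
      rw [hmul a b, hg0]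
      rcases hgv a with h | h <;>
        exact (El.mul_fst _ (by simp [h]) (by simp [h]) (by simp [h])).symm
    · intro a _
      rw [hI a, hg0]
      rcases hgv a with h | h <;> rw [h] <;> rfl
  set emb : B ↪[Sig T] El T :=
    ⟨⟨g, hinj⟩, fun {n} F x => hcomm F x, fun {n} r _ => PEmpty.elim r⟩ with hembdef
  have hcoe : ⇑emb = g := rfl
  refine ⟨emb, ?_⟩
  rw [hcoe]
  ext e
  constructor
  · rintro ⟨x, rfl⟩
    rcases hall x with rfl | rfl
    · rw [hg0]; exact Set.mem_insert _ _
    · rw [hgm]; exact Set.mem_insert_of_mem _ rfl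
  · intro he
    rcases he with rfl | he
    · exact ⟨zeroB T B, hg0⟩
    · rw [Set.mem_singleton_iff] at he
      subst he
      exact ⟨m, hgm⟩

lemma buildThree
    (hcore : ∀ {n : ℕ} (F : (Sig T).Functions n) (v : Fin n → B),
      Structure.funMap F v = coreMap (zeroB T B) (meetB T) (mulB T) (IB T) F v)
    (hms : ∀ x : B, meetB T x x = x)
    (hmn : ∀ x y : B, x ≠ y → meetB T x y = zeroB T B)
    (hMv : El.isV0 (El.Mv (T := T) false 1 false) = false)
    (h m : B) (hh : h ≠ zeroB T B) (hm : m ≠ zeroB T B) (hhm : h ≠ m)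
    (hall : ∀ x : B, x = zeroB T B ∨ x = h ∨ x = m)
    (hmul : ∀ x y : B, mulB T x y = zeroB T B)
    (hIh : IB T h = m) (hI0 : ∀ x : B, x ≠ h → IB T x = zeroB T B) : IsoThreeElt T B := by
  classical
  set g : B → El T := fun x =>
    if x = zeroB T B then El.zero else if x = h then El.H else El.Mv false 1 false
    with hgdef
  have hg0 : g (zeroB T B) = El.zero := if_pos rfl
  have hgh : g h = El.H := by rw [hgdef]; simp [hh]
  have hgm : g m = El.Mv false 1 false := by rw [hgdef]; simp [hm, Ne.symm hhm]
  have hgv : ∀ x : B, g x = El.zero ∨ g x = El.H ∨ g x = El.Mv false 1 false := by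
    intro x
    rcases hall x with rfl | rfl | rfl
    · exact Or.inl hg0
    · exact Or.inr (Or.inl hgh)
    · exact Or.inr (Or.inr hgm)
  have hinj : Function.Injective g := by
    intro a b hab
    rcases hall a with rfl | rfl | rfl <;> rcases hall b with rfl | rfl | rfl <;>
      simp_all
  have hcomm : ∀ {n : ℕ} (F : (Sig T).Functions n) (v : Fin n → B),
      g (Structure.funMap F v) = Structure.funMap F (g ∘ v) := by
    intro n F v
    have hgoods : ∀ i, (g ∘ v) i ≠ El.one ∧ (g ∘ v) i ≠ El.two ∧ ((g ∘ v) i).isV0 = false := by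
      intro i
      rcases hgv (v i) with hx | hx | hx <;>
        exact ⟨by simp [hx], by simp [hx],
          by show El.isV0 (g (v i)) = false; rw [hx]; first | rfl | exact hMv⟩
    have hbars : ∀ i j, El.bar ((g ∘ v) j) ≠ some ((g ∘ v) i) := by
      intro i j
      rcases hgv (v i) with hx | hx | hx <;> rcases hgv (v j) with hy | hy | hy <;>
        simp [Function.comp_apply, hx, hy, El.bar]
    rw [hcore F v, elCore F (g ∘ v) hgoods hbars]
    refine coreMap_map (s := (Set.univ : Set B)) g (Set.mem_univ _)
      (fun _ _ _ _ => Set.mem_univ _) hg0 ?_ ?_ ?_ F v (fun _ => Set.mem_univ _)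
    · intro a _ b _
      by_cases hab : a = b
      · subst hab; rw [hms, El.meet_self]
      · rw [hmn a b hab, hg0, El.meet_ne (fun e => hab (hinj e))]
    · intro a _ b _
      rw [hmul a b, hg0]
      symm
      rcases hgv a with hx | hx | hx
      · exact El.mul_fst _ (by simp [hx]) (by simp [hx]) (by simp [hx])
      · rw [hx]
        exact El.mul_H (by rcases hgv b with hy | hy | hy <;> simp [hy])
      · exact El.mul_fst _ (by simp [hx]) (by simp [hx]) (by simp [hx])
    · intro a _
      by_cases hah : a = h
      · subst hah; rw [hIh, hgm, hgh]; rfl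
      · rw [hI0 a hah, hg0]
        rcases hall a with rfl | rfl | rfl
        · rw [hg0]; rfl
        · exact absurd rfl hah
        · rw [hgm]; rfl
  set emb : B ↪[Sig T] El T :=
    ⟨⟨g, hinj⟩, fun {n} F x => hcomm F x, fun {n} r _ => PEmpty.elim r⟩ with hembdef
  have hcoe : ⇑emb = g := rfl
  refine ⟨emb, ?_⟩
  rw [hcoe]
  ext e
  constructor
  · rintro ⟨x, rfl⟩
    rcases hall x with rfl | rfl | rfl
    · rw [hg0]; exact Set.mem_insert _ _
    · rw [hgh]; exact Set.mem_insert_of_mem _ (Set.mem_insert _ _)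
    · rw [hgm]; exact Set.mem_insert_of_mem _ (Set.mem_insert_of_mem _ rfl)
  · intro he
    rcases he with rfl | rfl | he
    · exact ⟨zeroB T B, hg0⟩
    · exact ⟨h, hgh⟩
    · rw [Set.mem_singleton_iff] at he
      subst he
      exact ⟨m, hgm⟩

end Build

section BuildW

variable {T : TM} {B : Type*} [(Sig T).Structure B]

lemma buildW
    (hcore : ∀ {n : ℕ} (F : (Sig T).Functions n) (v : Fin n → B),
      Structure.funMap F v = coreMap (zeroB T B) (meetB T) (mulB T) (IB T) F v)
    (hms : ∀ x : B, meetB T x x = x)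
    (hmn : ∀ x y : B, x ≠ y → meetB T x y = zeroB T B)
    (hMv : El.isV0 (El.Mv (T := T) false 1 false) = false)
    (h c d : B) (hh : h ≠ zeroB T B) (hc : c ≠ zeroB T B) (hd : d ≠ zeroB T B)
    (hhc : h ≠ c) (hhd : h ≠ d) (hcd : c ≠ d)
    (hall : ∀ x : B, x = zeroB T B ∨ x = h ∨ x = c ∨ x = d)
    (hmulhc : mulB T h c = d)
    (hmul0 : ∀ x y : B, ¬(x = h ∧ y = c) → mulB T x y = zeroB T B)
    (hI : ∀ x : B, IB T x = zeroB T B) : IsoW T B := by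
  classical
  set s : Set (El T) :=
    {El.zero, El.H, El.C false, El.D false, El.Mv false 1 false} with hsdef
  have hmem : ∀ x : El T, x ∈ s ↔ (x = El.zero ∨ x = El.H ∨ x = El.C false ∨
      x = El.D false ∨ x = El.Mv false 1 false) := by
    intro x
    simp [hsdef, Set.mem_insert_iff, Set.mem_singleton_iff]
  have h0s : El.zero ∈ s := Set.mem_insert _ _
  have hsgood : ∀ x ∈ s, x ≠ El.one ∧ x ≠ El.two ∧ El.isV0 x = false := by
    intro x hx
    rw [hmem] at hx
    rcases hx with rfl | rfl | rfl | rfl | rfl <;>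
      exact ⟨by simp, by simp, by first | rfl | exact hMv⟩
  have hsbar : ∀ x ∈ s, ∀ y ∈ s, El.bar y ≠ some x := by
    intro x hx y hy
    rw [hmem] at hx hy
    rcases hx with rfl | rfl | rfl | rfl | rfl <;>
      rcases hy with rfl | rfl | rfl | rfl | rfl <;> simp [El.bar]
  have hmts : ∀ a ∈ s, ∀ b ∈ s, El.meet a b ∈ s := by
    intro a ha b hb
    by_cases hab : a = b
    · subst hab; rw [El.meet_self]; exact ha
    · rw [El.meet_ne hab]; exact h0s
  have hmul_s : ∀ a ∈ s, ∀ b ∈ s,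
      (a = El.H ∧ b = El.C false ∧ El.mul a b = El.D false) ∨
      (¬(a = El.H ∧ b = El.C false) ∧ El.mul a b = El.zero) := by
    intro a ha b hb
    rw [hmem] at ha hb
    rcases ha with rfl | rfl | rfl | rfl | rfl <;>
      rcases hb with rfl | rfl | rfl | rfl | rfl <;> simp [El.mul]
  have hmls : ∀ a ∈ s, ∀ b ∈ s, El.mul a b ∈ s := by
    intro a ha b hb
    rcases hmul_s a ha b hb with ⟨_, _, hm⟩ | ⟨_, hm⟩ <;> rw [hm, hmem] <;> simp
  have hiis : ∀ a ∈ s, El.opI a ∈ s := by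
    intro a ha
    rw [hmem] at ha
    rcases ha with rfl | rfl | rfl | rfl | rfl <;> rw [hmem] <;> simp [El.opI]
  set F' : El T → B := fun e =>
    if e = El.H then h else if e = El.C false then c
    else if e = El.D false then d else zeroB T B with hF'def
  have hF'H : F' El.H = h := if_pos rfl
  have hF'C : F' (El.C false) = c := by rw [hF'def]; simp
  have hF'D : F' (El.D false) = d := by rw [hF'def]; simp
  have hF'0 : F' El.zero = zeroB T B := by rw [hF'def]; simp
  have hF'M : F' (El.Mv false 1 false) = zeroB T B := by rw [hF'def]; simp
  clear hF'def
  have hker0 : ∀ a ∈ s, ∀ b ∈ s, a ≠ b → F' a = F' b → F' a = zeroB T B := by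
    intro a ha b hb hab hFab
    rw [hmem] at ha hb
    rcases ha with rfl | rfl | rfl | rfl | rfl <;>
      rcases hb with rfl | rfl | rfl | rfl | rfl
    · exact absurd rfl hab
    · exact hF'0
    · exact hF'0
    · exact hF'0
    · exact hF'0
    · rw [hF'H, hF'0] at hFab; exact absurd hFab hh
    · exact absurd rfl hab
    · rw [hF'H, hF'C] at hFab; exact absurd hFab hhc
    · rw [hF'H, hF'D] at hFab; exact absurd hFab hhd
    · rw [hF'H, hF'M] at hFab; exact absurd hFab hh
    · rw [hF'C, hF'0] at hFab; exact absurd hFab hc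
    · rw [hF'C, hF'H] at hFab; exact absurd hFab (Ne.symm hhc)
    · exact absurd rfl hab
    · rw [hF'C, hF'D] at hFab; exact absurd hFab hcd
    · rw [hF'C, hF'M] at hFab; exact absurd hFab hc
    · rw [hF'D, hF'0] at hFab; exact absurd hFab hd
    · rw [hF'D, hF'H] at hFab; exact absurd hFab (Ne.symm hhd)
    · rw [hF'D, hF'C] at hFab; exact absurd hFab (Ne.symm hcd)
    · exact absurd rfl hab
    · rw [hF'D, hF'M] at hFab; exact absurd hFab hd
    · exact hF'M
    · exact hF'M
    · exact hF'M
    · exact hF'M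
    · exact absurd rfl hab
  have hFa : ∀ a ∈ s, F' a = h → a = El.H := by
    intro a ha hFa
    rw [hmem] at ha
    rcases ha with rfl | rfl | rfl | rfl | rfl
    · rw [hF'0] at hFa; exact absurd hFa.symm hh
    · rfl
    · rw [hF'C] at hFa; exact absurd hFa.symm hhc
    · rw [hF'D] at hFa; exact absurd hFa.symm hhd
    · rw [hF'M] at hFa; exact absurd hFa.symm hh
  have hFb : ∀ b ∈ s, F' b = c → b = El.C false := by
    intro b hb hFb
    rw [hmem] at hb
    rcases hb with rfl | rfl | rfl | rfl | rfl
    · rw [hF'0] at hFb; exact absurd hFb.symm hc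
    · rw [hF'H] at hFb; exact absurd hFb.symm (Ne.symm hhc)
    · rfl
    · rw [hF'D] at hFb; exact absurd hFb.symm hcd
    · rw [hF'M] at hFb; exact absurd hFb.symm hc
  have hmtc : ∀ a ∈ s, ∀ b ∈ s, F' (El.meet a b) = meetB T (F' a) (F' b) := by
    intro a ha b hb
    by_cases hab : a = b
    · subst hab; rw [El.meet_self, hms]
    · rw [El.meet_ne hab, hF'0]
      by_cases hFab : F' a = F' b
      · rw [← hFab, hms]
        exact (hker0 a ha b hb hab hFab).symm
      · rw [hmn _ _ hFab]
  have hmlc : ∀ a ∈ s, ∀ b ∈ s, F' (El.mul a b) = mulB T (F' a) (F' b) := by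
    intro a ha b hb
    rcases hmul_s a ha b hb with ⟨rfl, rfl, hm⟩ | ⟨hne, hm⟩
    · rw [hm, hF'D, hF'H, hF'C, hmulhc]
    · rw [hm, hF'0, hmul0 (F' a) (F' b)
        (fun hx => hne ⟨hFa a ha hx.1, hFb b hb hx.2⟩)]
  have hiic : ∀ a ∈ s, F' (El.opI a) = IB T (F' a) := by
    intro a ha
    rw [hI]
    rw [hmem] at ha
    rcases ha with rfl | rfl | rfl | rfl | rfl
    · exact hF'0
    · rw [show El.opI (El.H : El T) = El.Mv false 1 false from rfl]; exact hF'M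
    · exact hF'0
    · exact hF'0
    · exact hF'0
  set S0 : (Sig T).Substructure (El T) :=
    ⟨s, fun {n} F v hv => by
      rw [elCore F v (fun i => hsgood _ (hv i)) (fun i j => hsbar _ (hv i) _ (hv j))]
      exact coreMap_mem h0s hmts hmls hiis F v hv⟩ with hS0def
  clear hS0def
  have hf0fun : ∀ {n : ℕ} (F : (Sig T).Functions n) (v : Fin n → S0),
      F' ((Structure.funMap F v : S0) : El T) = Structure.funMap F (fun i => F' (v i : El T)) := by
    intro n F v
    have hvals : ∀ i, ((v i : El T)) ∈ s := fun i => (v i).2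
    rw [show ((Structure.funMap F v : S0) : El T)
      = Structure.funMap F (fun i => ((v i : El T))) from rfl]
    rw [elCore F _ (fun i => hsgood _ (hvals i)) (fun i j => hsbar _ (hvals i) _ (hvals j))]
    rw [hcore F _]
    exact coreMap_map (s := s) F' h0s hmts hF'0 hmtc hmlc hiic F _ hvals
  set f0 : S0 →[Sig T] B :=
    ⟨fun x => F' (x : El T), fun {n} F v => hf0fun F v, fun {n} r _ _ => PEmpty.elim r⟩
    with hf0def
  have hf0 : ∀ x : S0, f0 x = F' (x : El T) := fun x => rfl
  clear hf0def
  have hHs : El.H ∈ s := by rw [hmem]; simp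
  have hCs : El.C false ∈ s := by rw [hmem]; simp
  have hDs : El.D false ∈ s := by rw [hmem]; simp
  refine ⟨S0, f0, rfl, ?_, ?_⟩
  · intro b
    rcases hall b with rfl | rfl | rfl | rfl
    · exact ⟨⟨El.zero, h0s⟩, hF'0⟩
    · exact ⟨⟨El.H, hHs⟩, hF'H⟩
    · exact ⟨⟨El.C false, hCs⟩, hF'C⟩
    · exact ⟨⟨El.D false, hDs⟩, hF'D⟩
  · have hHp : El.H ∉ ({El.zero, El.Mv false 1 false} : Set (El T)) := by
      rintro (h' | h') <;> exact El.noConfusion rfl (heq_of_eq h')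
    have hCp : El.C false ∉ ({El.zero, El.Mv false 1 false} : Set (El T)) := by
      rintro (h' | h') <;> exact El.noConfusion rfl (heq_of_eq h')
    have hDp : El.D false ∉ ({El.zero, El.Mv false 1 false} : Set (El T)) := by
      rintro (h' | h') <;> exact El.noConfusion rfl (heq_of_eq h')
    intro x y
    obtain ⟨xv, hx⟩ := x
    obtain ⟨yv, hy⟩ := y
    have hx2 : xv ∈ s := hx
    have hy2 : yv ∈ s := hy
    rw [hmem] at hx2 hy2
    rw [hf0, hf0]
    rcases hx2 with rfl | rfl | rfl | rfl | rfl <;>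
      rcases hy2 with rfl | rfl | rfl | rfl | rfl
    · exact iff_of_true rfl (Or.inl rfl)
    · refine iff_of_false (by rw [hF'0, hF'H]; exact (Ne.symm hh)) ?_
      rintro (heq | ⟨h1, h2⟩)
      · exact El.noConfusion rfl (heq_of_eq (congrArg Subtype.val heq))
      · exact hHp h2
    · refine iff_of_false (by rw [hF'0, hF'C]; exact (Ne.symm hc)) ?_
      rintro (heq | ⟨h1, h2⟩)
      · exact El.noConfusion rfl (heq_of_eq (congrArg Subtype.val heq))
      · exact hCp h2
    · refine iff_of_false (by rw [hF'0, hF'D]; exact (Ne.symm hd)) ?_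
      rintro (heq | ⟨h1, h2⟩)
      · exact El.noConfusion rfl (heq_of_eq (congrArg Subtype.val heq))
      · exact hDp h2
    · exact iff_of_true (by rw [hF'0, hF'M]) (Or.inr ⟨Set.mem_insert _ _, Set.mem_insert_of_mem _ rfl⟩)
    · refine iff_of_false (by rw [hF'H, hF'0]; exact hh) ?_
      rintro (heq | ⟨h1, h2⟩)
      · exact El.noConfusion rfl (heq_of_eq (congrArg Subtype.val heq))
      · exact hHp h1
    · exact iff_of_true rfl (Or.inl rfl)
    · refine iff_of_false (by rw [hF'H, hF'C]; exact hhc) ?_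
      rintro (heq | ⟨h1, h2⟩)
      · exact El.noConfusion rfl (heq_of_eq (congrArg Subtype.val heq))
      · exact hHp h1
    · refine iff_of_false (by rw [hF'H, hF'D]; exact hhd) ?_
      rintro (heq | ⟨h1, h2⟩)
      · exact El.noConfusion rfl (heq_of_eq (congrArg Subtype.val heq))
      · exact hHp h1
    · refine iff_of_false (by rw [hF'H, hF'M]; exact hh) ?_
      rintro (heq | ⟨h1, h2⟩)
      · exact El.noConfusion rfl (heq_of_eq (congrArg Subtype.val heq))
      · exact hHp h1
    · refine iff_of_false (by rw [hF'C, hF'0]; exact hc) ?_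
      rintro (heq | ⟨h1, h2⟩)
      · exact El.noConfusion rfl (heq_of_eq (congrArg Subtype.val heq))
      · exact hCp h1
    · refine iff_of_false (by rw [hF'C, hF'H]; exact (Ne.symm hhc)) ?_
      rintro (heq | ⟨h1, h2⟩)
      · exact El.noConfusion rfl (heq_of_eq (congrArg Subtype.val heq))
      · exact hCp h1
    · exact iff_of_true rfl (Or.inl rfl)
    · refine iff_of_false (by rw [hF'C, hF'D]; exact hcd) ?_
      rintro (heq | ⟨h1, h2⟩)
      · exact El.noConfusion rfl (heq_of_eq (congrArg Subtype.val heq))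
      · exact hCp h1
    · refine iff_of_false (by rw [hF'C, hF'M]; exact hc) ?_
      rintro (heq | ⟨h1, h2⟩)
      · exact El.noConfusion rfl (heq_of_eq (congrArg Subtype.val heq))
      · exact hCp h1
    · refine iff_of_false (by rw [hF'D, hF'0]; exact hd) ?_
      rintro (heq | ⟨h1, h2⟩)
      · exact El.noConfusion rfl (heq_of_eq (congrArg Subtype.val heq))
      · exact hDp h1
    · refine iff_of_false (by rw [hF'D, hF'H]; exact (Ne.symm hhd)) ?_
      rintro (heq | ⟨h1, h2⟩)
      · exact El.noConfusion rfl (heq_of_eq (congrArg Subtype.val heq))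
      · exact hDp h1
    · refine iff_of_false (by rw [hF'D, hF'C]; exact (Ne.symm hcd)) ?_
      rintro (heq | ⟨h1, h2⟩)
      · exact El.noConfusion rfl (heq_of_eq (congrArg Subtype.val heq))
      · exact hDp h1
    · exact iff_of_true rfl (Or.inl rfl)
    · refine iff_of_false (by rw [hF'D, hF'M]; exact hd) ?_
      rintro (heq | ⟨h1, h2⟩)
      · exact El.noConfusion rfl (heq_of_eq (congrArg Subtype.val heq))
      · exact hDp h1
    · exact iff_of_true (by rw [hF'M, hF'0]) (Or.inr ⟨Set.mem_insert_of_mem _ rfl, Set.mem_insert _ _⟩)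
    · refine iff_of_false (by rw [hF'M, hF'H]; exact (Ne.symm hh)) ?_
      rintro (heq | ⟨h1, h2⟩)
      · exact El.noConfusion rfl (heq_of_eq (congrArg Subtype.val heq))
      · exact hHp h2
    · refine iff_of_false (by rw [hF'M, hF'C]; exact (Ne.symm hc)) ?_
      rintro (heq | ⟨h1, h2⟩)
      · exact El.noConfusion rfl (heq_of_eq (congrArg Subtype.val heq))
      · exact hCp h2
    · refine iff_of_false (by rw [hF'M, hF'D]; exact (Ne.symm hd)) ?_
      rintro (heq | ⟨h1, h2⟩)
      · exact El.noConfusion rfl (heq_of_eq (congrArg Subtype.val heq))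
      · exact hDp h2
    · exact iff_of_true rfl (Or.inl rfl)
end BuildW

section Card

variable {T : TM} {B : Type*} [(Sig T).Structure B]

lemma cardTwo (h2 : IsoTwoElt T B) : Nat.card B = 2 := by
  obtain ⟨g, hg⟩ := h2
  rw [Nat.card_congr (Equiv.ofInjective _ g.injective), hg,
    Nat.card_coe_set_eq, Set.ncard_pair (fun h => El.noConfusion rfl (heq_of_eq h))]

lemma cardThree (h3 : IsoThreeElt T B) : Nat.card B = 3 := by
  obtain ⟨g, hg⟩ := h3
  rw [Nat.card_congr (Equiv.ofInjective _ g.injective), hg,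
    Nat.card_coe_set_eq]
  rw [Set.ncard_eq_three]
  exact ⟨_, _, _, fun h => El.noConfusion rfl (heq_of_eq h), fun h => El.noConfusion rfl (heq_of_eq h),
    fun h => El.noConfusion rfl (heq_of_eq h), rfl⟩

lemma cardW (h4 : IsoW T B) : Nat.card B = 4 := by
  classical
  obtain ⟨S', f', hcar, hsurj, hker⟩ := h4
  have hmem : ∀ x : El T, x ∈ S' ↔ (x = El.zero ∨ x = El.H ∨ x = El.C false ∨
      x = El.D false ∨ x = El.Mv false 1 false) := by
    intro x
    rw [← SetLike.mem_coe, hcar]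
    simp [Set.mem_insert_iff, Set.mem_singleton_iff]
  have h0m : El.zero ∈ S' := by rw [hmem]; tauto
  have hHm : El.H ∈ S' := by rw [hmem]; tauto
  have hCm : El.C false ∈ S' := by rw [hmem]; tauto
  have hDm : El.D false ∈ S' := by rw [hmem]; tauto
  set b0 : B := f' ⟨El.zero, h0m⟩ with hb0
  set bh : B := f' ⟨El.H, hHm⟩ with hbh
  set bc : B := f' ⟨El.C false, hCm⟩ with hbc
  set bd : B := f' ⟨El.D false, hDm⟩ with hbd
  have hnotpair : ∀ x : El T, x = El.H ∨ x = El.C false ∨ x = El.D false →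
      x ∉ ({El.zero, El.Mv false 1 false} : Set (El T)) := by
    rintro x (rfl | rfl | rfl) (h' | h') <;> exact El.noConfusion rfl (heq_of_eq h')
  have hne : ∀ (u : El T) (hu : u ∈ S') (v : El T) (hv : v ∈ S'), u ≠ v →
      (u ∉ ({El.zero, El.Mv false 1 false} : Set (El T)) ∨
        v ∉ ({El.zero, El.Mv false 1 false} : Set (El T))) →
      f' ⟨u, hu⟩ ≠ f' ⟨v, hv⟩ := by
    intro u hu v hv huv hside he
    rcases (hker _ _).1 he with heq | ⟨hm1, hm2⟩
    · exact huv (congrArg Subtype.val heq)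
    · rcases hside with hs | hs
      · exact hs hm1
      · exact hs hm2
  have h0h : b0 ≠ bh := hne _ _ _ _ (fun h => El.noConfusion rfl (heq_of_eq h)) (Or.inr (hnotpair _ (by tauto)))
  have h0c : b0 ≠ bc := hne _ _ _ _ (fun h => El.noConfusion rfl (heq_of_eq h)) (Or.inr (hnotpair _ (by tauto)))
  have h0d : b0 ≠ bd := hne _ _ _ _ (fun h => El.noConfusion rfl (heq_of_eq h)) (Or.inr (hnotpair _ (by tauto)))
  have hhc : bh ≠ bc := hne _ _ _ _ (fun h => El.noConfusion rfl (heq_of_eq h)) (Or.inl (hnotpair _ (by tauto)))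
  have hhd : bh ≠ bd := hne _ _ _ _ (fun h => El.noConfusion rfl (heq_of_eq h)) (Or.inl (hnotpair _ (by tauto)))
  have hcd : bc ≠ bd := hne _ _ _ _ (fun h => El.noConfusion rfl (heq_of_eq h)) (Or.inl (hnotpair _ (by tauto)))
  have huniv : (Set.univ : Set B) = {b0, bh, bc, bd} := by
    ext b
    simp only [Set.mem_univ, true_iff]
    obtain ⟨x, rfl⟩ := hsurj b
    obtain ⟨xv, hx⟩ := x
    have hx2 : xv ∈ S' := hx
    rw [hmem] at hx2
    rcases hx2 with rfl | rfl | rfl | rfl | rfl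
    · exact Set.mem_insert _ _
    · exact Set.mem_insert_of_mem _ (Set.mem_insert _ _)
    · exact Set.mem_insert_of_mem _ (Set.mem_insert_of_mem _ (Set.mem_insert _ _))
    · exact Set.mem_insert_of_mem _ (Set.mem_insert_of_mem _ (Set.mem_insert_of_mem _ rfl))
    · have : f' ⟨El.Mv false 1 false, hx⟩ = b0 := by
        rw [hb0]
        exact (hker _ _).2 (Or.inr ⟨Set.mem_insert_of_mem _ rfl, Set.mem_insert _ _⟩)
      rw [this]
      exact Set.mem_insert _ _
  have hfin3 : ({bc, bd} : Set B).Finite := (Set.finite_singleton _).insert _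
  have hfin2 : ({bh, bc, bd} : Set B).Finite := hfin3.insert _
  rw [← Set.ncard_univ, huniv,
    Set.ncard_insert_of_notMem (by
      rintro (h' | h' | h') <;> first
        | exact h0h h'
        | exact h0c h'
        | exact h0d h') hfin2,
    Set.ncard_insert_of_notMem (by
      rintro (h' | h') <;> first
        | exact hhc h'
        | exact hhd h') hfin3,
    Set.ncard_pair hcd]

end Card

theorem small_si_classification' (T : TM) (B : Type*) [(Sig T).Structure B]
    (hHS : InHS T B) (hnt : ∃ x y : B, x ≠ y) (hSI : IsSI (Sig T) B)
    (he : ∀ (σ : SIdx B) (x : B), eApp T σ x = zeroB T B) :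
    (IsoTwoElt T B ∨ IsoThreeElt T B ∨ IsoW T B) := by
  classical
  obtain ⟨S, f, hf⟩ := hHS
  obtain ⟨p₀, q₀, hpq⟩ := hnt
  have h0S : El.zero ∈ S := S.fun_mem (fn0 T) (fun i => i.elim0) (fun i => i.elim0)
  set z0 : S := ⟨El.zero, h0S⟩ with hz0def
  have hz0 : f z0 = zeroB T B := by
    have hze : zeroB T S = z0 := Subtype.ext rfl
    rw [← hze, map_zeroB]
  -- all elements collapse ⇒ contradiction with nontriviality
  have hallzero : ¬(∀ u : S, f u = zeroB T B) := by
    intro hz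
    obtain ⟨sp, rfl⟩ := hf p₀
    obtain ⟨sq, rfl⟩ := hf q₀
    exact hpq ((hz sp).trans (hz sq).symm)
  -- forbidden elements of S
  have hone : El.one ∉ S := by
    intro h1
    apply hallzero
    intro u
    have e1 : Structure.funMap (fn4 T Ops4.S1) ![(⟨El.one, h1⟩ : S), u, u, u] = u := by
      apply Subtype.ext
      show El.opS1 El.one (u : El T) (u : El T) (u : El T) = (u : El T)
      rw [show El.opS1 El.one (u : El T) (u : El T) (u : El T)
        = El.sCore (u : El T) (u : El T) (u : El T) from (by simp [El.opS1])]
      exact El.sCore_diag _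
    have e2 := f.map_fun (fn4 T Ops4.S1) ![(⟨El.one, h1⟩ : S), u, u, u]
    rw [e1] at e2
    rw [show ⇑f ∘ ![(⟨El.one, h1⟩ : S), u, u, u]
      = ![f ⟨El.one, h1⟩, f u, f u, f u] from by (funext i; fin_cases i <;> rfl)] at e2
    exact e2.trans (he (SIdx.s1 (f ⟨El.one, h1⟩)) (f u))
  have htwo : El.two ∉ S := by
    intro h1
    apply hallzero
    intro u
    have e1 : Structure.funMap (fn4 T Ops4.S1) ![(⟨El.two, h1⟩ : S), u, u, u] = u := by
      apply Subtype.ext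
      show El.opS1 El.two (u : El T) (u : El T) (u : El T) = (u : El T)
      rw [show El.opS1 El.two (u : El T) (u : El T) (u : El T)
        = El.sCore (u : El T) (u : El T) (u : El T) from (by simp [El.opS1])]
      exact El.sCore_diag _
    have e2 := f.map_fun (fn4 T Ops4.S1) ![(⟨El.two, h1⟩ : S), u, u, u]
    rw [e1] at e2
    rw [show ⇑f ∘ ![(⟨El.two, h1⟩ : S), u, u, u]
      = ![f ⟨El.two, h1⟩, f u, f u, f u] from by (funext i; fin_cases i <;> rfl)] at e2
    exact e2.trans (he (SIdx.s1 (f ⟨El.two, h1⟩)) (f u))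
  have hV0 : ∀ x ∈ S, El.isV0 x = false := by
    intro x hx
    by_contra hb
    have hb' : El.isV0 x = true := by
      revert hb; cases El.isV0 x <;> simp
    apply hallzero
    intro u
    have e1 : Structure.funMap (fn4 T Ops4.S0) ![(⟨x, hx⟩ : S), u, u, u] = u := by
      apply Subtype.ext
      show El.opS0 x (u : El T) (u : El T) (u : El T) = (u : El T)
      rw [show El.opS0 x (u : El T) (u : El T) (u : El T)
        = El.sCore (u : El T) (u : El T) (u : El T) from (by simp [El.opS0, hb'])]
      exact El.sCore_diag _
    have e2 := f.map_fun (fn4 T Ops4.S0) ![(⟨x, hx⟩ : S), u, u, u]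
    rw [e1] at e2
    rw [show ⇑f ∘ ![(⟨x, hx⟩ : S), u, u, u]
      = ![f ⟨x, hx⟩, f u, f u, f u] from by (funext i; fin_cases i <;> rfl)] at e2
    exact e2.trans (he (SIdx.s0 (f ⟨x, hx⟩)) (f u))
  have hbar : ∀ x ∈ S, ∀ y ∈ S, El.bar y ≠ some x := by
    intro x hx y hy hbxy
    apply hallzero
    intro u
    have e1 : Structure.funMap (fn5 T Ops5.S2) ![(⟨x, hx⟩ : S), ⟨y, hy⟩, u, u, u] = u := by
      apply Subtype.ext
      show El.opS2 x y (u : El T) (u : El T) (u : El T) = (u : El T)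
      rw [show El.opS2 x y (u : El T) (u : El T) (u : El T)
        = El.sCore (u : El T) (u : El T) (u : El T) from (by simp [El.opS2, hbxy])]
      exact El.sCore_diag _
    have e2 := f.map_fun (fn5 T Ops5.S2) ![(⟨x, hx⟩ : S), ⟨y, hy⟩, u, u, u]
    rw [e1] at e2
    rw [show ⇑f ∘ ![(⟨x, hx⟩ : S), ⟨y, hy⟩, u, u, u]
      = ![f ⟨x, hx⟩, f ⟨y, hy⟩, f u, f u, f u] from by (funext i; fin_cases i <;> rfl)] at e2
    exact e2.trans (he (SIdx.s2 (f ⟨x, hx⟩) (f ⟨y, hy⟩)) (f u))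
  have hS1 : ∀ x ∈ S, x ≠ El.one ∧ x ≠ El.two ∧ El.isV0 x = false :=
    fun x hx => ⟨fun e => hone (e ▸ hx), fun e => htwo (e ▸ hx), hV0 x hx⟩
  have hcore : ∀ {n : ℕ} (F : (Sig T).Functions n) (v : Fin n → B),
      Structure.funMap F v = coreMap (zeroB T B) (meetB T) (mulB T) (IB T) F v :=
    fun F v => coreB f hf hS1 hbar F v
  have hms : ∀ x : B, meetB T x x = x := meetB_self f hf
  have hmn : ∀ x y : B, x ≠ y → meetB T x y = zeroB T B := fun x y h => meetB_ne f hf h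
  set σ : B → S := Function.surjInv hf with hσdef
  have hσ : ∀ x, f (σ x) = x := fun x => Function.surjInv_eq hf x
  have hGs : ∀ s : S, ((s : El T) ≠ El.one ∧ (s : El T) ≠ El.two ∧
      El.isV0 (s : El T) = false) := fun s => hS1 _ s.2
  have inj0 : ∀ s t : S, f s = f t → s ≠ t → f s = zeroB T B := by
    intro s t he' hst
    calc f s = meetB T (f s) (f s) := (hms _).symm
      _ = meetB T (f s) (f t) := by rw [he']
      _ = f (meetB T s t) := (map_meetB f s t).symm
      _ = f (zeroB T S) := by rw [meetB_subtype_ne hst]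
      _ = zeroB T B := map_zeroB f
  have ulift : ∀ s : S, f s ≠ zeroB T B → σ (f s) = s := by
    intro s hs
    by_contra hne
    exact hs ((hσ (f s)).symm.trans (inj0 (σ (f s)) s (hσ (f s)) hne))
  have hliftdet : ∀ (x y : B), ((σ x : S) : El T) = ((σ y : S) : El T) → x = y := by
    intro x y he'
    rw [← hσ x, ← hσ y, Subtype.ext he']
  have hmulB' : ∀ (p q : B) (s t : S), f s = p → f t = q →
      mulB T p q = f (mulB T s t) := by
    intro p q s t hs ht
    rw [← hs, ← ht]
    exact (map_mulB f s t).symm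
  have hmulz : ∀ s t : S, El.mul (s : El T) (t : El T) = El.zero →
      f (mulB T s t) = zeroB T B := by
    intro s t h
    rw [show mulB T s t = zeroB T S from Subtype.ext ((val_mulB s t).trans h), map_zeroB]
  have hIB' : ∀ (p : B) (s : S), f s = p → IB T p = f (IB T s) := by
    intro p s hs
    rw [← hs]
    exact (map_IB f s).symm
  have hIz : ∀ s : S, El.opI (s : El T) = El.zero → f (IB T s) = zeroB T B := by
    intro s h
    rw [show IB T s = zeroB T S from Subtype.ext ((val_IB s).trans h), map_zeroB]
  have hmv : ∀ s t : S, El.mul (s : El T) (t : El T) = El.zero ∨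
      ∃ b', El.mul (s : El T) (t : El T) = El.D b' :=
    fun s t => El.mul_vals _ (hGs s).1
  have hnc : ∀ (x : El T) (p : x ≠ El.one) (p2 : x ≠ El.two) (p3 : x ≠ El.H),
      True := fun _ _ _ _ => trivial
  -- monolith element m
  obtain ⟨a, b, hab, hmono⟩ := hSI
  set m : B := if a = zeroB T B then b else a with hmdef
  have hm : m ≠ zeroB T B := by
    by_cases h : a = zeroB T B
    · rw [hmdef, if_pos h]
      exact fun e => hab (h.trans e.symm)
    · rw [hmdef, if_neg h]
      exact h
  have hmZ : ∀ Z : Set B, zeroB T B ∈ Z →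
      (∀ x ∈ Z, ∀ y : B, mulB T x y ∈ Z ∧ mulB T y x ∈ Z) →
      (∀ x ∈ Z, IB T x ∈ Z) → ∀ x ∈ Z, x ≠ zeroB T B → m ∈ Z := by
    intro Z h0 hmlZ hIZ x hxZ hx0
    have hcong := mkCong hcore hms hmn Z h0 hmlZ hIZ
    have hρ := hmono x (zeroB T B) hx0 _ hcong (Or.inr ⟨hxZ, h0⟩)
    rcases hρ with he' | ⟨ha', hb'⟩
    · exact absurd he' hab
    · by_cases h : a = zeroB T B
      · rw [hmdef, if_pos h]; exact hb'
      · rw [hmdef, if_neg h]; exact ha'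
  -- zero-row facts
  have hmul0L : ∀ q : B, mulB T (zeroB T B) q = zeroB T B := by
    intro q
    rw [hmulB' _ _ z0 (σ q) hz0 (hσ q)]
    exact hmulz _ _ (El.mul_fst _ (fun h => El.noConfusion rfl (heq_of_eq h)) (fun h => El.noConfusion rfl (heq_of_eq h))
      (fun h => El.noConfusion rfl (heq_of_eq h)))
  have hmul0R : ∀ q : B, mulB T q (zeroB T B) = zeroB T B := by
    intro q
    rw [hmulB' _ _ (σ q) z0 (hσ q) hz0]
    exact hmulz _ _ (El.mul_zero_right _)
  have hI0 : IB T (zeroB T B) = zeroB T B := by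
    rw [hIB' _ z0 hz0]
    exact hIz z0 rfl
  -- (1) single-type atoms force m = x
  have hsingle : ∀ x : B, x ≠ zeroB T B → ((σ x : S) : El T) ≠ El.H →
      (∀ b', ((σ x : S) : El T) ≠ El.C b') → m = x := by
    intro x hx0 hH hC
    have hres := hmZ {p | p = zeroB T B ∨ p = x} (Or.inl rfl) ?_ ?_ x (Or.inr rfl) hx0
    · rcases hres with h | h
      · exact absurd h hm
      · exact h
    · intro p hp q
      rcases hp with rfl | hpx
      · exact ⟨Or.inl (hmul0L q), Or.inl (hmul0R q)⟩
      · rw [hpx]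
        constructor
        · left
          rw [hmulB' _ _ (σ x) (σ q) (hσ x) (hσ q)]
          exact hmulz _ _ (El.mul_fst _ (hGs (σ x)).1 (hGs (σ x)).2.1 hH)
        · left
          rw [hmulB' _ _ (σ q) (σ x) (hσ q) (hσ x)]
          exact hmulz _ _ (El.mul_snd (hGs (σ q)).1 (hGs (σ q)).2.1 hC)
    · intro p hp
      rcases hp with rfl | hpx
      · exact Or.inl hI0
      · rw [hpx]
        left
        rw [hIB' _ (σ x) (hσ x)]
        exact hIz _ ((El.opI_eq (hGs (σ x)).1 (hGs (σ x)).2.1).trans (if_neg hH))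
  -- (2) H-atoms
  have hHcase : ∀ x : B, x ≠ zeroB T B → ((σ x : S) : El T) = El.H →
      m = x ∨ m = f (IB T (σ x)) ∨ ∃ t : S, m = f (mulB T (σ x) t) := by
    intro x hx0 hxH
    have hIv : ((IB T (σ x) : S) : El T) = El.Mv false 1 false := by
      rw [val_IB, hxH]; rfl
    have hres := hmZ {p | p = zeroB T B ∨ p = x ∨ p = f (IB T (σ x)) ∨
        ∃ t : S, p = f (mulB T (σ x) t)} (Or.inl rfl) ?_ ?_ x (Or.inr (Or.inl rfl)) hx0
    · rcases hres with h | h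
      · exact absurd h hm
      · exact h
    · intro p hp q
      rcases hp with rfl | hpx | rfl | ⟨t, rfl⟩
      · exact ⟨Or.inl (hmul0L q), Or.inl (hmul0R q)⟩
      · rw [hpx]
        constructor
        · exact Or.inr (Or.inr (Or.inr ⟨σ q, hmulB' _ _ (σ x) (σ q) (hσ x) (hσ q)⟩))
        · left
          rw [hmulB' _ _ (σ q) (σ x) (hσ q) (hσ x)]
          refine hmulz _ _ (El.mul_snd (hGs (σ q)).1 (hGs (σ q)).2.1 ?_)
          intro b' hb'
          rw [hxH] at hb'
          exact El.noConfusion rfl (heq_of_eq hb')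
      · constructor
        · left
          rw [hmulB' _ _ (IB T (σ x)) (σ q) rfl (hσ q)]
          refine hmulz _ _ ?_
          rw [hIv]
          exact El.mul_fst _ (fun h => El.noConfusion rfl (heq_of_eq h)) (fun h => El.noConfusion rfl (heq_of_eq h))
            (fun h => El.noConfusion rfl (heq_of_eq h))
        · left
          rw [hmulB' _ _ (σ q) (IB T (σ x)) (hσ q) rfl]
          refine hmulz _ _ (El.mul_snd (hGs (σ q)).1 (hGs (σ q)).2.1 ?_)
          intro b' hb'
          rw [hIv] at hb'
          exact El.noConfusion rfl (heq_of_eq hb')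
      · constructor
        · left
          rw [hmulB' _ _ (mulB T (σ x) t) (σ q) rfl (hσ q)]
          refine hmulz _ _ ?_
          rw [val_mulB]
          rcases hmv (σ x) t with hz | ⟨b', hb'⟩
          · rw [hz]
            exact El.mul_fst _ (fun h => El.noConfusion rfl (heq_of_eq h)) (fun h => El.noConfusion rfl (heq_of_eq h))
              (fun h => El.noConfusion rfl (heq_of_eq h))
          · rw [hb']
            exact El.mul_fst _ (fun h => El.noConfusion rfl (heq_of_eq h)) (fun h => El.noConfusion rfl (heq_of_eq h))
              (fun h => El.noConfusion rfl (heq_of_eq h))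
        · left
          rw [hmulB' _ _ (σ q) (mulB T (σ x) t) (hσ q) rfl]
          refine hmulz _ _ (El.mul_snd (hGs (σ q)).1 (hGs (σ q)).2.1 ?_)
          intro b' hb'
          rw [val_mulB] at hb'
          rcases hmv (σ x) t with hz | ⟨b'', hb''⟩
          · rw [hz] at hb'; exact El.noConfusion rfl (heq_of_eq hb')
          · rw [hb''] at hb'; exact El.noConfusion rfl (heq_of_eq hb')
    · intro p hp
      rcases hp with rfl | hpx | rfl | ⟨t, rfl⟩
      · exact Or.inl hI0
      · rw [hpx]
        exact Or.inr (Or.inr (Or.inl (hIB' x (σ x) (hσ x))))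
      · left
        rw [hIB' _ (IB T (σ x)) rfl]
        refine hIz _ ?_
        rw [hIv]
        rfl
      · left
        rw [hIB' _ (mulB T (σ x) t) rfl]
        refine hIz _ ?_
        rw [val_mulB]
        rcases hmv (σ x) t with hz | ⟨b', hb'⟩
        · rw [hz]; rfl
        · rw [hb']; rfl
  -- (3) C-atoms
  have hCcase : ∀ (x : B) (b' : Bool), x ≠ zeroB T B → ((σ x : S) : El T) = El.C b' →
      m = x ∨ ∃ t : S, m = f (mulB T t (σ x)) := by
    intro x bx hx0 hxC
    have hres := hmZ {p | p = zeroB T B ∨ p = x ∨ ∃ t : S, p = f (mulB T t (σ x))}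
      (Or.inl rfl) ?_ ?_ x (Or.inr (Or.inl rfl)) hx0
    · rcases hres with h | h
      · exact absurd h hm
      · exact h
    · intro p hp q
      rcases hp with rfl | hpx | ⟨t, rfl⟩
      · exact ⟨Or.inl (hmul0L q), Or.inl (hmul0R q)⟩
      · rw [hpx]
        constructor
        · left
          rw [hmulB' _ _ (σ x) (σ q) (hσ x) (hσ q)]
          refine hmulz _ _ (El.mul_fst _ (hGs (σ x)).1 (hGs (σ x)).2.1 ?_)
          intro h
          rw [hxC] at h
          exact El.noConfusion rfl (heq_of_eq h)
        · exact Or.inr (Or.inr ⟨σ q, hmulB' _ _ (σ q) (σ x) (hσ q) (hσ x)⟩)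
      · constructor
        · left
          rw [hmulB' _ _ (mulB T t (σ x)) (σ q) rfl (hσ q)]
          refine hmulz _ _ ?_
          rw [val_mulB]
          rcases hmv t (σ x) with hz | ⟨b2, hb2⟩
          · rw [hz]
            exact El.mul_fst _ (fun h => El.noConfusion rfl (heq_of_eq h)) (fun h => El.noConfusion rfl (heq_of_eq h))
              (fun h => El.noConfusion rfl (heq_of_eq h))
          · rw [hb2]
            exact El.mul_fst _ (fun h => El.noConfusion rfl (heq_of_eq h)) (fun h => El.noConfusion rfl (heq_of_eq h))
              (fun h => El.noConfusion rfl (heq_of_eq h))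
        · left
          rw [hmulB' _ _ (σ q) (mulB T t (σ x)) (hσ q) rfl]
          refine hmulz _ _ (El.mul_snd (hGs (σ q)).1 (hGs (σ q)).2.1 ?_)
          intro b2 hb2
          rw [val_mulB] at hb2
          rcases hmv t (σ x) with hz | ⟨b3, hb3⟩
          · rw [hz] at hb2; exact El.noConfusion rfl (heq_of_eq hb2)
          · rw [hb3] at hb2; exact El.noConfusion rfl (heq_of_eq hb2)
    · intro p hp
      rcases hp with rfl | hpx | ⟨t, rfl⟩
      · exact Or.inl hI0
      · rw [hpx]
        left
        rw [hIB' _ (σ x) (hσ x)]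
        refine hIz _ ?_
        rw [hxC]
        rfl
      · left
        rw [hIB' _ (mulB T t (σ x)) rfl]
        refine hIz _ ?_
        rw [val_mulB]
        rcases hmv t (σ x) with hz | ⟨b2, hb2⟩
        · rw [hz]; rfl
        · rw [hb2]; rfl
  -- value of σ m from an identification m = f s
  have hsm_of : ∀ s : S, m = f s → ((σ m : S) : El T) = (s : El T) := by
    intro s hms'
    have hns : f s ≠ zeroB T B := by rw [← hms']; exact hm
    rw [show σ m = σ (f s) from by rw [hms'], ulift s hns]
  -- main case analysis on the lift of m
  by_cases hmH : ((σ m : S) : El T) = El.H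
  · -- m is an H-atom: two-element algebra
    left
    have hallB : ∀ x : B, x = zeroB T B ∨ x = m := by
      intro x
      by_cases hx0 : x = zeroB T B
      · exact Or.inl hx0
      right
      by_cases hxH : ((σ x : S) : El T) = El.H
      · exact hliftdet x m (hxH.trans hmH.symm)
      by_cases hxC : ∃ b', ((σ x : S) : El T) = El.C b'
      · exfalso
        obtain ⟨bx, hbx⟩ := hxC
        rcases hCcase x bx hx0 hbx with hmx | ⟨t, hmt⟩
        · have h1 := hmH
          rw [hmx, hbx] at h1
          exact El.noConfusion rfl (heq_of_eq h1)
        · have h1 := hsm_of _ hmt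
          rw [hmH, val_mulB] at h1
          rcases hmv t (σ x) with hz | ⟨b2, hb2⟩
          · rw [hz] at h1; exact El.noConfusion rfl (heq_of_eq h1)
          · rw [hb2] at h1; exact El.noConfusion rfl (heq_of_eq h1)
      · exact (hsingle x hx0 hxH (fun b' hb' => hxC ⟨b', hb'⟩)).symm
    have hmulall : ∀ x y : B, mulB T x y = zeroB T B := by
      intro x y
      rcases hallB x with rfl | rfl
      · exact hmul0L y
      rcases hallB y with rfl | rfl
      · exact hmul0R m
      · rw [hmulB' _ _ (σ m) (σ m) (hσ m) (hσ m)]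
        refine hmulz _ _ ?_
        rw [hmH]
        exact El.mul_H (fun b' hb' => El.noConfusion rfl (heq_of_eq hb'))
    have hM0z : f (IB T (σ m)) = zeroB T B := by
      by_contra hne
      have hIv : ((IB T (σ m) : S) : El T) = El.Mv false 1 false := by
        rw [val_IB, hmH]; rfl
      have h1 := hsingle (f (IB T (σ m))) hne
        (by rw [ulift _ hne, hIv]; exact fun h => El.noConfusion rfl (heq_of_eq h))
        (by intro b' h; rw [ulift _ hne, hIv] at h; exact El.noConfusion rfl (heq_of_eq h))
      have h2 := hsm_of _ h1
      rw [hmH, hIv] at h2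
      exact El.noConfusion rfl (heq_of_eq h2)
    have hIall : ∀ x : B, IB T x = zeroB T B := by
      intro x
      rcases hallB x with rfl | rfl
      · exact hI0
      · rw [hIB' _ (σ m) (hσ m)]
        exact hM0z
    exact buildTwo hcore hms hmn m hm hallB hmulall hIall
  by_cases hmC : ∃ b', ((σ m : S) : El T) = El.C b'
  · -- m is a C-atom: two-element algebra
    left
    obtain ⟨bm, hbm⟩ := hmC
    have hallB : ∀ x : B, x = zeroB T B ∨ x = m := by
      intro x
      by_cases hx0 : x = zeroB T B
      · exact Or.inl hx0
      right
      by_cases hxH : ((σ x : S) : El T) = El.H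
      · exfalso
        rcases hHcase x hx0 hxH with hmx | hmi | ⟨t, hmt⟩
        · have h1 := hbm
          rw [hmx, hxH] at h1
          exact El.noConfusion rfl (heq_of_eq h1)
        · have h1 := hsm_of _ hmi
          rw [hbm, val_IB, hxH] at h1
          exact El.noConfusion rfl (heq_of_eq h1)
        · have h1 := hsm_of _ hmt
          rw [hbm, val_mulB] at h1
          rcases hmv (σ x) t with hz | ⟨b2, hb2⟩
          · rw [hz] at h1; exact El.noConfusion rfl (heq_of_eq h1)
          · rw [hb2] at h1; exact El.noConfusion rfl (heq_of_eq h1)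
      by_cases hxC : ∃ b', ((σ x : S) : El T) = El.C b'
      · obtain ⟨bx, hbx⟩ := hxC
        by_cases hbb : bx = bm
        · exact hliftdet x m (by rw [hbx, hbm, hbb])
        · exfalso
          refine hbar _ (σ x).2 _ (σ m).2 ?_
          rw [hbm, hbx]
          have hnb : (!bm) = bx := by
            cases bm <;> cases bx <;> first | rfl | exact absurd rfl hbb
          rw [show El.bar (El.C (T := T) bm) = some (El.C (!bm)) from rfl, hnb]
      · exact (hsingle x hx0 hxH (fun b' hb' => hxC ⟨b', hb'⟩)).symm
    have hmulall : ∀ x y : B, mulB T x y = zeroB T B := by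
      intro x y
      rcases hallB x with rfl | rfl
      · exact hmul0L y
      rcases hallB y with rfl | rfl
      · exact hmul0R m
      · rw [hmulB' _ _ (σ m) (σ m) (hσ m) (hσ m)]
        refine hmulz _ _ (El.mul_fst _ (hGs (σ m)).1 (hGs (σ m)).2.1 ?_)
        rw [hbm]
        exact fun h => El.noConfusion rfl (heq_of_eq h)
    have hIall : ∀ x : B, IB T x = zeroB T B := by
      intro x
      rcases hallB x with rfl | rfl
      · exact hI0
      · rw [hIB' _ (σ m) (hσ m)]
        refine hIz _ ?_
        rw [hbm]
        rfl
    exact buildTwo hcore hms hmn m hm hallB hmulall hIall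
  -- m is a single-type atom
  by_cases hHat : ∃ x : B, x ≠ zeroB T B ∧ ((σ x : S) : El T) = El.H
  · obtain ⟨h', hh'0, hh'H⟩ := hHat
    have hIv : ((IB T (σ h') : S) : El T) = El.Mv false 1 false := by
      rw [val_IB, hh'H]; rfl
    have hMvS : El.isV0 (El.Mv (T := T) false 1 false) = false := by
      have h1 := (hS1 _ (IB T (σ h')).2).2.2
      rw [hIv] at h1
      exact h1
    rcases hHcase h' hh'0 hh'H with hmx | hmi | ⟨t, hmt⟩
    · exact absurd (by rw [hmx]; exact hh'H) hmH
    · -- three-element case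
      right; left
      have hsmM : ((σ m : S) : El T) = El.Mv false 1 false := by
        rw [hsm_of _ hmi, hIv]
      have hh'm : h' ≠ m := by
        intro e
        have h1 := hh'H
        rw [e, hsmM] at h1
        exact El.noConfusion rfl (heq_of_eq h1)
      have hallB : ∀ x : B, x = zeroB T B ∨ x = h' ∨ x = m := by
        intro x
        by_cases hx0 : x = zeroB T B
        · exact Or.inl hx0
        right
        by_cases hxH : ((σ x : S) : El T) = El.H
        · exact Or.inl (hliftdet x h' (hxH.trans hh'H.symm))
        right
        by_cases hxC : ∃ b', ((σ x : S) : El T) = El.C b'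
        · exfalso
          obtain ⟨bx, hbx⟩ := hxC
          rcases hCcase x bx hx0 hbx with hmx2 | ⟨t2, hmt2⟩
          · have h1 := hsmM
            rw [hmx2, hbx] at h1
            exact El.noConfusion rfl (heq_of_eq h1)
          · have h1 := hsm_of _ hmt2
            rw [hsmM, val_mulB] at h1
            rcases hmv t2 (σ x) with hz | ⟨b2, hb2⟩
            · rw [hz] at h1; exact El.noConfusion rfl (heq_of_eq h1)
            · rw [hb2] at h1; exact El.noConfusion rfl (heq_of_eq h1)
        · exact (hsingle x hx0 hxH (fun b' hb' => hxC ⟨b', hb'⟩)).symm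
      have hmulall : ∀ x y : B, mulB T x y = zeroB T B := by
        intro x y
        rcases hallB x with hx | hx | hx
        · rw [hx]; exact hmul0L y
        · rcases hallB y with hy | hy | hy
          · rw [hx, hy]; exact hmul0R h'
          · rw [hx, hy, hmulB' _ _ (σ h') (σ h') (hσ h') (hσ h')]
            refine hmulz _ _ ?_
            rw [hh'H]
            exact El.mul_H (fun b' hb' => El.noConfusion rfl (heq_of_eq hb'))
          · rw [hx, hy, hmulB' _ _ (σ h') (σ m) (hσ h') (hσ m)]
            refine hmulz _ _ ?_
            rw [hh'H]
            exact El.mul_H (fun b' hb' => by rw [hsmM] at hb'; exact El.noConfusion rfl (heq_of_eq hb'))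
        · rw [hx, hmulB' _ _ (σ m) (σ y) (hσ m) (hσ y)]
          refine hmulz _ _ (El.mul_fst _ (hGs (σ m)).1 (hGs (σ m)).2.1 ?_)
          rw [hsmM]
          exact fun h => El.noConfusion rfl (heq_of_eq h)
      have hIh : IB T h' = m := by
        rw [hIB' _ (σ h') (hσ h')]
        exact hmi.symm
      have hI0' : ∀ x : B, x ≠ h' → IB T x = zeroB T B := by
        intro x hxh
        rcases hallB x with hx | hx | hx
        · rw [hx]; exact hI0
        · exact absurd hx hxh
        · rw [hx, hIB' _ (σ m) (hσ m)]
          refine hIz _ ?_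
          rw [hsmM]
          rfl
      exact buildThree hcore hms hmn hMvS h' m hh'0 hm hh'm hallB hmulall hIh hI0'
    · -- W case (or degenerate)
      rcases hmv (σ h') t with hz | ⟨bd', hbd⟩
      · exfalso
        have h1 := hsm_of _ hmt
        rw [val_mulB, hz] at h1
        have h2 : σ m = z0 := Subtype.ext h1
        exact hm (by rw [← hσ m, h2, hz0])
      right; right
      have hsmD : ((σ m : S) : El T) = El.D bd' := by
        rw [hsm_of _ hmt, val_mulB, hbd]
      have hmne : El.mul ((σ h' : S) : El T) (t : El T) ≠ El.zero := by
        rw [hbd]; exact fun h => El.noConfusion rfl (heq_of_eq h)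
      obtain ⟨bc', hH2, htC⟩ := El.mul_ne_zero (hGs (σ h')).1 (hGs (σ h')).2.1 hmne
      set c' : B := f t with hc'def
      have hc'0 : c' ≠ zeroB T B := by
        intro he0
        have h1 : m = mulB T h' c' := by
          rw [hmulB' h' c' (σ h') t (hσ h') rfl]
          exact hmt
        rw [he0, hmulB' h' (zeroB T B) (σ h') z0 (hσ h') hz0] at h1
        exact hm (h1.trans (hmulz _ _ (El.mul_zero_right _)))
      have hσc' : σ c' = t := ulift t hc'0
      have hh'c : h' ≠ c' := by
        intro e
        have h1 := hh'H
        rw [e, hσc', htC] at h1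
        exact El.noConfusion rfl (heq_of_eq h1)
      have hh'm : h' ≠ m := by
        intro e
        have h1 := hh'H
        rw [e, hsmD] at h1
        exact El.noConfusion rfl (heq_of_eq h1)
      have hc'm : c' ≠ m := by
        intro e
        have h1 : ((σ c' : S) : El T) = El.D bd' := by rw [e, hsmD]
        rw [hσc', htC] at h1
        exact El.noConfusion rfl (heq_of_eq h1)
      have hmulhc : mulB T h' c' = m := by
        rw [hmulB' h' c' (σ h') t (hσ h') rfl]
        exact hmt.symm
      have hIB0 : f (IB T (σ h')) = zeroB T B := by
        by_contra hne
        have h1 := hsingle (f (IB T (σ h'))) hne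
          (by rw [ulift _ hne, hIv]; exact fun h => El.noConfusion rfl (heq_of_eq h))
          (by intro b' h; rw [ulift _ hne, hIv] at h; exact El.noConfusion rfl (heq_of_eq h))
        have h2 := hsm_of _ h1
        rw [hsmD, hIv] at h2
        exact El.noConfusion rfl (heq_of_eq h2)
      have hallB : ∀ x : B, x = zeroB T B ∨ x = h' ∨ x = c' ∨ x = m := by
        intro x
        by_cases hx0 : x = zeroB T B
        · exact Or.inl hx0
        right
        by_cases hxH : ((σ x : S) : El T) = El.H
        · exact Or.inl (hliftdet x h' (hxH.trans hh'H.symm))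
        right
        by_cases hxC : ∃ b', ((σ x : S) : El T) = El.C b'
        · obtain ⟨bx, hbx⟩ := hxC
          by_cases hbb : bx = bc'
          · exact Or.inl (hliftdet x c' (by rw [hbx, hσc', htC, hbb]))
          · exfalso
            refine hbar _ (σ x).2 _ t.2 ?_
            rw [htC, hbx]
            have hnb : (!bc') = bx := by
              cases bc' <;> cases bx <;> first | rfl | exact absurd rfl hbb
            rw [show El.bar (El.C (T := T) bc') = some (El.C (!bc')) from rfl, hnb]
        · exact Or.inr ((hsingle x hx0 hxH (fun b' hb' => hxC ⟨b', hb'⟩)).symm)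
      have hmul0 : ∀ x y : B, ¬(x = h' ∧ y = c') → mulB T x y = zeroB T B := by
        intro x y hexcl
        rcases hallB x with hx | hx | hx | hx
        · rw [hx]; exact hmul0L y
        · rcases hallB y with hy | hy | hy | hy
          · rw [hx, hy]; exact hmul0R h'
          · rw [hx, hy, hmulB' _ _ (σ h') (σ h') (hσ h') (hσ h')]
            refine hmulz _ _ ?_
            rw [hh'H]
            exact El.mul_H (fun b' hb' => El.noConfusion rfl (heq_of_eq hb'))
          · exact absurd ⟨hx, hy⟩ hexcl
          · rw [hx, hy, hmulB' _ _ (σ h') (σ m) (hσ h') (hσ m)]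
            refine hmulz _ _ ?_
            rw [hh'H]
            exact El.mul_H (fun b' hb' => by rw [hsmD] at hb'; exact El.noConfusion rfl (heq_of_eq hb'))
        · rw [hx, hmulB' _ _ (σ c') (σ y) (hσ c') (hσ y)]
          refine hmulz _ _ (El.mul_fst _ (hGs (σ c')).1 (hGs (σ c')).2.1 ?_)
          rw [hσc', htC]
          exact fun h => El.noConfusion rfl (heq_of_eq h)
        · rw [hx, hmulB' _ _ (σ m) (σ y) (hσ m) (hσ y)]
          refine hmulz _ _ (El.mul_fst _ (hGs (σ m)).1 (hGs (σ m)).2.1 ?_)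
          rw [hsmD]
          exact fun h => El.noConfusion rfl (heq_of_eq h)
      have hIall : ∀ x : B, IB T x = zeroB T B := by
        intro x
        rcases hallB x with hx | hx | hx | hx
        · rw [hx]; exact hI0
        · rw [hx, hIB' _ (σ h') (hσ h')]
          exact hIB0
        · rw [hx, hIB' _ (σ c') (hσ c')]
          refine hIz _ ?_
          rw [hσc', htC]
          rfl
        · rw [hx, hIB' _ (σ m) (hσ m)]
          refine hIz _ ?_
          rw [hsmD]
          rfl
      exact buildW hcore hms hmn hMvS h' c' m hh'0 hc'0 hm hh'c hh'm hc'm hallB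
        hmulhc hmul0 hIall
  · -- no H-atom: two-element algebra
    left
    have hallB : ∀ x : B, x = zeroB T B ∨ x = m := by
      intro x
      by_cases hx0 : x = zeroB T B
      · exact Or.inl hx0
      right
      by_cases hxH : ((σ x : S) : El T) = El.H
      · exact absurd ⟨x, hx0, hxH⟩ hHat
      by_cases hxC : ∃ b', ((σ x : S) : El T) = El.C b'
      · obtain ⟨bx, hbx⟩ := hxC
        rcases hCcase x bx hx0 hbx with hmx | ⟨t2, hmt2⟩
        · exact hmx.symm
        · exfalso
          rcases hmv t2 (σ x) with hz | ⟨b2, hb2⟩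
          · -- value zero: m = 0
            apply hm
            rw [hmt2, hmulz _ _ hz]
          · have hmne2 : El.mul ((t2 : S) : El T) ((σ x : S) : El T) ≠ El.zero := by
              rw [hb2]; exact fun h => El.noConfusion rfl (heq_of_eq h)
            obtain ⟨b3, hH3, hC3⟩ := El.mul_ne_zero (hGs t2).1 (hGs t2).2.1 hmne2
            have hft2 : f t2 = zeroB T B := by
              by_contra hne
              exact hHat ⟨f t2, hne, by rw [ulift t2 hne]; exact hH3⟩
            have h1 : m = mulB T (zeroB T B) x := by
              rw [hmulB' (zeroB T B) x t2 (σ x) hft2 (hσ x)]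
              exact hmt2
            rw [hmul0L x] at h1
            exact hm h1
      · exact (hsingle x hx0 hxH (fun b' hb' => hxC ⟨b', hb'⟩)).symm
    have hmulall : ∀ x y : B, mulB T x y = zeroB T B := by
      intro x y
      rcases hallB x with rfl | rfl
      · exact hmul0L y
      rcases hallB y with rfl | rfl
      · exact hmul0R m
      · rw [hmulB' _ _ (σ m) (σ m) (hσ m) (hσ m)]
        exact hmulz _ _ (El.mul_fst _ (hGs (σ m)).1 (hGs (σ m)).2.1 hmH)
    have hIall : ∀ x : B, IB T x = zeroB T B := by
      intro x
      rcases hallB x with rfl | rfl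
      · exact hI0
      · rw [hIB' _ (σ m) (hσ m)]
        exact hIz _ ((El.opI_eq (hGs (σ m)).1 (hGs (σ m)).2.1).trans (if_neg hmH))
    exact buildTwo hcore hms hmn m hm hallB hmulall hIall

/-- A nontrivial subdirectly irreducible `B ∈ HS(A'(T))`
satisfying `e_i(ȳ,x) ≈ 0` for all `i ∈ {0,1,2}` is isomorphic to exactly one of:
the two-element subalgebra `{0,C}`, the three-element subalgebra `{0,H,M₁⁰}`, or
the four-element quotient `W = {0,H,C,D,M₁⁰}/Cg(M₁⁰,0)`. -/
theorem small_si_classification (T : TM) (B : Type*) [(Sig T).Structure B]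
    (hHS : InHS T B) (hnt : ∃ x y : B, x ≠ y) (hSI : IsSI (Sig T) B)
    (he : ∀ (σ : SIdx B) (x : B), eApp T σ x = zeroB T B) :
    (IsoTwoElt T B ∨ IsoThreeElt T B ∨ IsoW T B) ∧
    ¬(IsoTwoElt T B ∧ IsoThreeElt T B) ∧
    ¬(IsoTwoElt T B ∧ IsoW T B) ∧
    ¬(IsoThreeElt T B ∧ IsoW T B) := by
  refine ⟨small_si_classification' T B hHS hnt hSI he, ?_, ?_, ?_⟩
  · rintro ⟨hA, hB⟩
    have h1 := cardTwo hA
    have h2 := cardThree hB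
    omega
  · rintro ⟨hA, hB⟩
    have h1 := cardTwo hA
    have h2 := cardW hB
    omega
  · rintro ⟨hA, hB⟩
    have h1 := cardThree hA
    have h2 := cardW hB
    omega

end McKenzie
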